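/- arXiv:2201.11809 — 8 statements merged into one kernel-verified Lean document; each statement's English description precedes it below -/
import Mathlib

section
/- Let N ≥ 1, a ∈ ℝ^N, c ∈ ℂ, and let z ∈ ℂ^N have pairwise distinct entries such that moreover z_i + c ≠ z_j for all i ≠ j. Then Σ_{i=1}^N [∏_{j≠i} (c + z_i − z_j)/(z_i − z_j)] · B_a(z_1, …, z_{i−1}, z_i + c, z_{i+1}, …, z_N) = (Σ_{i=1}^N e^{c a_i}) · B_a(z_1, …, z_N). In other words, the multivariate Bessel function B_a is an eigenfunction of the operator D_c with eigenvalue Σ_i e^{c a_i}. -/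
/-!
Shifting `z i` by `c` scales row `i` of `A = [exp (z k * a j)]` entrywise by `d j = exp (c * a j)`
and multiplies `∏_{p<q} (z p - z q)` by `∏_{j ≠ i} (z i + c - z j) / (z i - z j)`, which is
exactly the coefficient in `D_c`. So the `i`-th term of `D_c B_a` is the determinant of `A` with
row `i` scaled by `d`, over the unshifted difference product. Expanding each of these determinants
along the scaled row by the adjugate, their sum is
`trace (A * diagonal d * adjugate A) = trace (adjugate A * A * diagonal d) = (∑ j, d j) * det A`.
-/

open Finset

/-- The multivariate Bessel function
`B_a(z) = det[exp(z_i a_j)] / ∏_{i<j} (z_i − z_j)`. -/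
noncomputable def MVBessel (N : ℕ) (a : Fin N → ℝ) (z : Fin N → ℂ) : ℂ :=
  (Matrix.of fun i j : Fin N => Complex.exp (z i * (a j : ℂ))).det /
    ∏ i : Fin N, ∏ j ∈ Finset.Ioi i, (z i - z j)

namespace Matrix

variable {n R : Type*} [Fintype n] [DecidableEq n] [CommRing R]

theorem det_updateRow_eq_vecMul_adjugate (A : Matrix n n R) (i : n) (b : n → R) :
    (A.updateRow i b).det = (b ᵥ* A.adjugate) i := by
  rw [← cramer_transpose_apply, cramer_eq_adjugate_mulVec, ← adjugate_transpose,
    mulVec_transpose]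

theorem sum_det_updateRow_mul (A : Matrix n n R) (d : n → R) :
    ∑ i, (A.updateRow i fun j => A i j * d j).det = (∑ j, d j) * A.det := by
  have hdiag (i : n) :
      (A * diagonal d * A.adjugate) i i = ((fun j => A i j * d j) ᵥ* A.adjugate) i := by
    simp [mul_apply, vecMul, dotProduct, diagonal_apply]
  calc ∑ i, (A.updateRow i fun j => A i j * d j).det
      = trace (A * diagonal d * A.adjugate) := by
        simp only [det_updateRow_eq_vecMul_adjugate, trace, diag, hdiag]
    _ = trace (A.adjugate * A * diagonal d) := by rw [trace_mul_cycle]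
    _ = (∑ j, d j) * A.det := by
        rw [adjugate_mul, smul_mul, one_mul, trace_smul, trace_diagonal, smul_eq_mul, mul_comm]

end Matrix

theorem Finset.prod_erase_univ_eq_prod_Iio_mul_prod_Ioi {ι M : Type*} [Fintype ι]
    [LinearOrder ι] [LocallyFiniteOrderTop ι] [LocallyFiniteOrderBot ι] [DecidableEq ι]
    [CommMonoid M]
    (f : ι → M) (i : ι) :
    ∏ j ∈ univ.erase i, f j = (∏ j ∈ Iio i, f j) * ∏ j ∈ Ioi i, f j := by
  rw [← prod_filter_mul_prod_filter_not (univ.erase i) (· < i)]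
  congr 2 <;> ext j <;> simp only [mem_filter, mem_erase, mem_univ, mem_Iio, mem_Ioi] <;> grind

section DiffProd

variable {ι R : Type*} [Fintype ι] [LinearOrder ι] [LocallyFiniteOrderTop ι] [CommRing R]

def diffProd (z : ι → R) : R := ∏ i, ∏ j ∈ Ioi i, (z i - z j)

theorem diffProd_update [LocallyFiniteOrderBot ι] [DecidableEq ι] (z : ι → R) (i : ι) (t : R) :
    diffProd (Function.update z i t) =
      (∏ q ∈ Ioi i, (t - z q)) * (∏ p ∈ Iio i, (z p - t)) *
        ∏ p ∈ univ.erase i, ∏ q ∈ (Ioi p).erase i, (z p - z q) := by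
  have row_i : ∏ q ∈ Ioi i, (Function.update z i t i - Function.update z i t q) =
      ∏ q ∈ Ioi i, (t - z q) :=
    prod_congr rfl fun q hq => by
      rw [Function.update_self, Function.update_of_ne (mem_Ioi.1 hq).ne']
  have row_p : ∀ p ∈ univ.erase i,
      ∏ q ∈ Ioi p, (Function.update z i t p - Function.update z i t q) =
        (if p < i then z p - t else 1) * ∏ q ∈ (Ioi p).erase i, (z p - z q) := by
    intro p hp
    rw [Function.update_of_ne (ne_of_mem_erase hp)]
    split_ifs with hpi
    · rw [← mul_prod_erase _ _ (mem_Ioi.2 hpi), Function.update_self]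
      exact congrArg _ (prod_congr rfl fun q hq => by
        rw [Function.update_of_ne (ne_of_mem_erase hq)])
    · have hi : i ∉ Ioi p := by simpa using hpi
      rw [erase_eq_of_notMem hi, one_mul]
      exact prod_congr rfl fun q hq => by
        rw [Function.update_of_ne (ne_of_mem_of_not_mem hq hi)]
  have hfilter : (univ.erase i).filter (· < i) = Iio i := by
    ext p; simp only [mem_filter, mem_erase, mem_univ, mem_Iio]; grind
  rw [diffProd, ← mul_prod_erase univ _ (mem_univ i), row_i, prod_congr rfl row_p,
    prod_mul_distrib, prod_ite, prod_const_one, mul_one, hfilter, mul_assoc]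

theorem diffProd_update_mul [LocallyFiniteOrderBot ι] [DecidableEq ι] (z : ι → R) (i : ι)
    (t : R) :
    diffProd (Function.update z i t) * ∏ j ∈ univ.erase i, (z i - z j) =
      diffProd z * ∏ j ∈ univ.erase i, (t - z j) := by
  have h_self := diffProd_update z i (z i)
  rw [Function.update_eq_self] at h_self
  have h_Iio : (∏ p ∈ Iio i, (z p - t)) * ∏ p ∈ Iio i, (z i - z p) =
      (∏ p ∈ Iio i, (z p - z i)) * ∏ p ∈ Iio i, (t - z p) := by
    simp only [← prod_mul_distrib]
    exact prod_congr rfl fun _ _ => by ring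
  rw [diffProd_update, h_self, prod_erase_univ_eq_prod_Iio_mul_prod_Ioi (fun j => z i - z j),
    prod_erase_univ_eq_prod_Iio_mul_prod_Ioi (fun j => t - z j)]
  linear_combination (∏ q ∈ Ioi i, (t - z q)) * (∏ q ∈ Ioi i, (z i - z q)) *
    (∏ p ∈ univ.erase i, ∏ q ∈ (Ioi p).erase i, (z p - z q)) * h_Iio

theorem diffProd_ne_zero [IsDomain R] {z : ι → R} (hz : Function.Injective z) :
    diffProd z ≠ 0 :=
  prod_ne_zero_iff.2 fun _ _ => prod_ne_zero_iff.2 fun _ hq =>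
    sub_ne_zero.2 (hz.ne (mem_Ioi.1 hq).ne)

end DiffProd

theorem Function.Injective.update {α β : Type*} [DecidableEq α] {f : α → β}
    (hf : Function.Injective f) {i : α} {b : β} (hb : ∀ j ≠ i, b ≠ f j) :
    Function.Injective (Function.update f i b) := by
  intro p q hpq
  by_cases hp : p = i <;> by_cases hq : q = i
  · rw [hp, hq]
  · subst hp
    rw [Function.update_self, Function.update_of_ne hq] at hpq
    exact absurd hpq (hb q hq)
  · subst hq
    rw [Function.update_self, Function.update_of_ne hp] at hpq
    exact absurd hpq.symm (hb p hp)
  · rwa [Function.update_of_ne hp, Function.update_of_ne hq, hf.eq_iff] at hpq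

noncomputable def expMatrix {ι : Type*} (z w : ι → ℂ) : Matrix ι ι ℂ :=
  Matrix.of fun i j => Complex.exp (z i * w j)

theorem expMatrix_update_add {ι : Type*} [DecidableEq ι] (z w : ι → ℂ) (i : ι) (c : ℂ) :
    expMatrix (Function.update z i (z i + c)) w =
      (expMatrix z w).updateRow i fun j => expMatrix z w i j * Complex.exp (c * w j) := by
  ext k j
  rcases eq_or_ne k i with rfl | hk
  · simp only [expMatrix, Matrix.of_apply, Matrix.updateRow_self, Function.update_self,
      ← Complex.exp_add, add_mul]
  · simp only [expMatrix, Matrix.of_apply, Matrix.updateRow_ne hk, Function.update_of_ne hk]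

theorem MVBessel_eq (N : ℕ) (a : Fin N → ℝ) (z : Fin N → ℂ) :
    MVBessel N a z = (expMatrix z fun j => (a j : ℂ)).det / diffProd z := rfl

theorem stmt2_general (N : ℕ) (a : Fin N → ℝ) (c : ℂ) (z : Fin N → ℂ)
    (hz : Function.Injective z)
    (hzc : ∀ i j : Fin N, i ≠ j → z i + c ≠ z j) :
    ∑ i : Fin N,
        (∏ j ∈ Finset.univ.erase i, (c + z i - z j) / (z i - z j)) *
          MVBessel N a (Function.update z i (z i + c))
      = (∑ i : Fin N, Complex.exp (c * (a i : ℂ))) * MVBessel N a z := by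
  set A := expMatrix z fun j => (a j : ℂ)
  set d : Fin N → ℂ := fun j => Complex.exp (c * (a j : ℂ))
  have hV : diffProd z ≠ 0 := diffProd_ne_zero hz
  have term_eq (i : Fin N) :
      (∏ j ∈ univ.erase i, (c + z i - z j) / (z i - z j)) *
          MVBessel N a (Function.update z i (z i + c)) =
        (A.updateRow i fun j => A i j * d j).det / diffProd z := by
    have hV_update : diffProd (Function.update z i (z i + c)) ≠ 0 :=
      diffProd_ne_zero (hz.update fun j hj => hzc i j hj.symm)
    have hP : ∏ j ∈ univ.erase i, (z i - z j) ≠ 0 :=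
      prod_ne_zero_iff.2 fun j hj => sub_ne_zero.2 (hz.ne (ne_of_mem_erase hj).symm)
    have h_shift : ∏ j ∈ univ.erase i, (z i + c - z j) = ∏ j ∈ univ.erase i, (c + z i - z j) :=
      prod_congr rfl fun _ _ => by ring
    rw [MVBessel_eq, expMatrix_update_add, prod_div_distrib, div_mul_div_comm,
      div_eq_div_iff (mul_ne_zero hP hV_update) hV]
    linear_combination (-(A.updateRow i fun j => A i j * d j).det) *
      (diffProd_update_mul z i (z i + c) + diffProd z * h_shift)
  rw [sum_congr rfl fun i _ => term_eq i, ← sum_div, Matrix.sum_det_updateRow_mul, MVBessel_eq,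
    mul_div_assoc]

theorem stmt2 (N : ℕ) (hN : 1 ≤ N) (a : Fin N → ℝ) (c : ℂ) (z : Fin N → ℂ)
    (hz : Function.Injective z)
    (hzc : ∀ i j : Fin N, i ≠ j → z i + c ≠ z j) :
    ∑ i : Fin N,
        (∏ j ∈ Finset.univ.erase i, (c + z i - z j) / (z i - z j)) *
          MVBessel N a (Function.update z i (z i + c))
      = (∑ i : Fin N, Complex.exp (c * (a i : ℂ))) * MVBessel N a z :=
  stmt2_general N a c z hz hzc
end

section
/- Let μ be a Borel probability measure on ℝ with support contained in [a, b] where 0 < a ≤ b. Then: (i) ψ_μ is differentiable at every z ∈ (−∞, 0] with ψ_μ'(z) = ∫ x/(1 − zx)² dμ(x) > 0; (ii) ψ_μ(0) = 0; (iii) ψ_μ(z) → −1 as z → −∞; and (iv) the restriction of ψ_μ to (−∞, 0] is a strictly increasing bijection from (−∞, 0] onto (−1, 0]. -/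
open MeasureTheory Filter Set Topology

/-!
For `z ≤ 0` and `x ≥ 0` the integrand `z x / (1 - z x) = (1 - z x)⁻¹ - 1` lies in `(-1, 0]`, so
dominated convergence gives the limit `-1` at `-∞`. For `x ∈ [0, b]` and `w b < 1/2` its
derivative `x / (1 - w x)²` in `w` is bounded by `4 b`, which justifies differentiating under
the integral near every `z ≤ 0`. The derivative is positive, so `ψ` increases strictly on
`(-∞, 0]`, and a continuous strictly increasing function on `(-∞, 0]` is, by the intermediate
value theorem, a bijection onto the interval between its limit at `-∞` and its value at `0`.
-/

theorem StrictMonoOn.bijOn_Iic_Ioc {α β : Type*} [ConditionallyCompleteLinearOrder α]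
    [TopologicalSpace α] [OrderTopology α] [DenselyOrdered α] [NoMinOrder α]
    [LinearOrder β] [TopologicalSpace β] [OrderClosedTopology β]
    {f : α → β} {c : α} {l : β} (hf : StrictMonoOn f (Iic c)) (hcont : ContinuousOn f (Iic c))
    (hlim : Tendsto f atBot (𝓝 l)) : BijOn f (Iic c) (Ioc l (f c)) := by
  have hl : atBot ≤ 𝓟 (Iic c) := le_principal_iff.2 (Iic_mem_atBot c)
  refine ⟨fun z hz => ⟨?_, hf.monotoneOn hz self_mem_Iic hz⟩, hf.injOn,
    isPreconnected_Iic.intermediate_value_Ioc self_mem_Iic hl hcont hlim⟩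
  obtain ⟨w, hw⟩ := exists_lt z
  have hwc : w ∈ Iic c := hw.le.trans hz
  refine lt_of_le_of_lt (le_of_tendsto hlim ?_) (hf hwc hz hw)
  filter_upwards [Iic_mem_atBot w] with v hv
  exact hf.monotoneOn (hv.trans hwc) hwc hv

theorem MeasureTheory.integral_pos_of_ae_pos {α : Type*} [MeasurableSpace α] {μ : Measure α}
    [NeZero μ] {f : α → ℝ} (hf : ∀ᵐ x ∂μ, 0 < f x) (hfi : Integrable f μ) :
    0 < ∫ x, f x ∂μ := by
  rw [integral_pos_iff_support_of_nonneg_ae (hf.mono fun x hx => hx.le) hfi, pos_iff_ne_zero]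
  intro h
  obtain ⟨x, hpos, hx⟩ := (hf.and (measure_eq_zero_iff_ae_notMem.1 h)).exists
  exact hx hpos.ne'

noncomputable def psiTransform (μ : Measure ℝ) (z : ℝ) : ℝ :=
  ∫ x, z * x / (1 - z * x) ∂μ

theorem psiTransform_zero (μ : Measure ℝ) : psiTransform μ 0 = 0 := by
  simp [psiTransform]

section Pointwise

variable {z x : ℝ}

theorem mul_div_one_sub_mul_eq (h : 1 - z * x ≠ 0) :
    z * x / (1 - z * x) = (1 - z * x)⁻¹ - 1 := by
  field_simp
  ring

theorem abs_mul_div_one_sub_mul_le_one (hz : z ≤ 0) (hx : 0 ≤ x) :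
    |z * x / (1 - z * x)| ≤ 1 := by
  have hden : 1 ≤ 1 - z * x := by nlinarith
  rw [mul_div_one_sub_mul_eq (by positivity), abs_le]
  constructor
  · linarith [inv_pos.2 (zero_lt_one.trans_le hden)]
  · linarith [inv_le_one_of_one_le₀ hden]

theorem hasDerivAt_mul_div_one_sub_mul (h : 1 - z * x ≠ 0) :
    HasDerivAt (fun w => w * x / (1 - w * x)) (x / (1 - z * x) ^ 2) z := by
  have hnum : HasDerivAt (fun w => w * x) x z := by
    simpa using (hasDerivAt_id z).mul_const x
  exact (hnum.div (hnum.const_sub 1) h).congr_deriv (by ring)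

theorem tendsto_mul_div_one_sub_mul_atBot (hx : 0 < x) :
    Tendsto (fun z => z * x / (1 - z * x)) atBot (𝓝 (-1)) := by
  have hden : Tendsto (fun z => 1 - z * x) atBot atTop := by
    simpa [sub_eq_add_neg] using
      tendsto_atTop_add_const_left atBot 1 (tendsto_neg_atBot_atTop.atTop_mul_const hx)
  have := hden.inv_tendsto_atTop.sub_const 1
  rw [zero_sub] at this
  refine this.congr' ?_
  filter_upwards [Iic_mem_atBot 0] with z hz
  rw [mul_div_one_sub_mul_eq (by nlinarith [mem_Iic.1 hz]), Pi.inv_apply]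

theorem half_lt_one_sub_mul {w b : ℝ} (hx : x ∈ Icc 0 b) (hw : w * b < 1 / 2) :
    1 / 2 < 1 - w * x := by
  rcases le_total w 0 with h | h <;> nlinarith [hx.1, hx.2]

theorem abs_div_one_sub_mul_sq_le {w b : ℝ} (hx : x ∈ Icc 0 b) (hw : w * b < 1 / 2) :
    |x / (1 - w * x) ^ 2| ≤ 4 * b := by
  have hden := half_lt_one_sub_mul hx hw
  have hsq : 1 / 4 < (1 - w * x) ^ 2 := by nlinarith
  rw [abs_of_nonneg (div_nonneg hx.1 (sq_nonneg _)), div_le_iff₀ (by positivity)]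
  nlinarith [hx.1, hx.2]

end Pointwise

section Measure

variable {μ : Measure ℝ} {z : ℝ}

theorem integrable_mul_div_one_sub_mul [IsFiniteMeasure μ] (h0 : ∀ᵐ x ∂μ, 0 ≤ x) (hz : z ≤ 0) :
    Integrable (fun x => z * x / (1 - z * x)) μ :=
  (integrable_const 1).mono' ((by fun_prop : Measurable _).aestronglyMeasurable)
    (h0.mono fun _ hx => abs_mul_div_one_sub_mul_le_one hz hx)

theorem tendsto_psiTransform_atBot [IsProbabilityMeasure μ] (hpos : ∀ᵐ x ∂μ, 0 < x) :
    Tendsto (psiTransform μ) atBot (𝓝 (-1)) := by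
  have := tendsto_integral_filter_of_dominated_convergence (μ := μ) (l := atBot)
    (F := fun z x => z * x / (1 - z * x)) (f := fun _ => (-1 : ℝ)) (fun _ => 1)
    (Eventually.of_forall fun z => (by fun_prop : Measurable _).aestronglyMeasurable) ?_
    (integrable_const _) ?_
  · unfold psiTransform
    simpa using this
  · filter_upwards [Iic_mem_atBot 0] with z hz
    filter_upwards [hpos] with x hx using abs_mul_div_one_sub_mul_le_one hz hx.le
  · filter_upwards [hpos] with x hx using tendsto_mul_div_one_sub_mul_atBot hx

theorem hasDerivAt_psiTransform [IsFiniteMeasure μ] {b : ℝ} (hb : 0 ≤ b)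
    (hsupp : ∀ᵐ x ∂μ, x ∈ Icc 0 b) (hz : z ≤ 0) :
    Integrable (fun x => x / (1 - z * x) ^ 2) μ ∧
      HasDerivAt (psiTransform μ) (∫ x, x / (1 - z * x) ^ 2 ∂μ) z := by
  have hs : {w : ℝ | w * b < 1 / 2} ∈ 𝓝 z :=
    (isOpen_lt (by fun_prop) continuous_const).mem_nhds (show z * b < 1 / 2 by nlinarith)
  refine hasDerivAt_integral_of_dominated_loc_of_deriv_le
    (F := fun w x => w * x / (1 - w * x)) hs
    (Eventually.of_forall fun w => (by fun_prop : Measurable _).aestronglyMeasurable)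
    (integrable_mul_div_one_sub_mul (hsupp.mono fun _ hx => hx.1) hz)
    (F' := fun w x => x / (1 - w * x) ^ 2) ((by fun_prop : Measurable _).aestronglyMeasurable)
    (bound := fun _ => 4 * b) ?_ (integrable_const _) ?_
  · filter_upwards [hsupp] with x hx w hw using abs_div_one_sub_mul_sq_le hx hw
  · filter_upwards [hsupp] with x hx w hw
    exact hasDerivAt_mul_div_one_sub_mul (by linarith [half_lt_one_sub_mul hx hw])

end Measure

theorem stmt7 (a b : ℝ) (ha : 0 < a) (hab : a ≤ b)
    (μ : Measure ℝ) [IsProbabilityMeasure μ] (hsupp : ∀ᵐ x ∂μ, x ∈ Set.Icc a b)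
    (ψ : ℝ → ℝ) (hψ : ∀ z : ℝ, ψ z = ∫ x, (z * x) / (1 - z * x) ∂μ) :
    (∀ z : ℝ, z ≤ 0 →
        HasDerivAt ψ (∫ x, x / (1 - z * x) ^ 2 ∂μ) z ∧ 0 < ∫ x, x / (1 - z * x) ^ 2 ∂μ) ∧
    ψ 0 = 0 ∧
    Tendsto ψ atBot (nhds (-1)) ∧
    StrictMonoOn ψ (Set.Iic 0) ∧
    Set.BijOn ψ (Set.Iic 0) (Set.Ioc (-1) 0) := by
  obtain rfl : ψ = psiTransform μ := funext hψ
  have hpos : ∀ᵐ x ∂μ, 0 < x := hsupp.mono fun x hx => ha.trans_le hx.1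
  have hderiv (z : ℝ) (hz : z ≤ 0) :=
    hasDerivAt_psiTransform (ha.le.trans hab) (hsupp.mono fun x hx => ⟨ha.le.trans hx.1, hx.2⟩) hz
  have hderiv_pos (z : ℝ) (hz : z ≤ 0) : 0 < ∫ x, x / (1 - z * x) ^ 2 ∂μ :=
    integral_pos_of_ae_pos (hpos.mono fun x hx => div_pos hx (pow_pos (by nlinarith) 2))
      (hderiv z hz).1
  have hcont : ContinuousOn (psiTransform μ) (Iic 0) := fun z hz =>
    (hderiv z hz).2.continuousAt.continuousWithinAt
  have hmono : StrictMonoOn (psiTransform μ) (Iic 0) :=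
    strictMonoOn_of_hasDerivWithinAt_pos (convex_Iic 0) hcont
      (fun z hz => (hderiv z (interior_subset (s := Iic 0) hz)).2.hasDerivWithinAt)
      (fun z hz => hderiv_pos z (interior_subset (s := Iic 0) hz))
  have hlim := tendsto_psiTransform_atBot hpos
  refine ⟨fun z hz => ⟨(hderiv z hz).2, hderiv_pos z hz⟩, psiTransform_zero μ, hlim, hmono, ?_⟩
  simpa only [psiTransform_zero] using hmono.bijOn_Iic_Ioc hcont hlim
end

section
/- Let μ be a Borel probability measure on ℝ with support contained in [a, b] where 0 < a ≤ b, with moments m_n = ∫ x^n dμ(x), mean κ_1 = m_1 and variance κ_2 = m_2 − m_1². Suppose δ > 0 and g : (−δ, δ) → ℝ is infinitely differentiable with g(0) = 0, |g(u)| < 1/b for all u, and ψ_μ(g(u)) = u for all u ∈ (−δ, δ). Define S(u) = (1 + u)·g(u)/u for u ≠ 0 and S(0) = g'(0). Then S is twice differentiable at 0 with S(0) = 1/κ_1, S'(0) = −κ_2/κ_1³, and S''(0) = 4·m_2²/m_1⁵ − 2·m_3/m_1⁴ − 2·m_2/m_1³. -/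
open MeasureTheory Filter Set Metric Topology


lemma aux_bound (a b t x β : ℝ) (ha : 0 < a) (hx : x ∈ Set.Icc a b)
    (htβ : |t| * b ≤ β) (hβ : β < 1) (k : ℕ) :
    |x ^ k / (1 - t * x) ^ (k + 1)| ≤ b ^ k / (1 - β) ^ (k + 1) := by
  obtain ⟨hax, hxb⟩ := hx
  have hx0 : 0 < x := lt_of_lt_of_le ha hax
  have hb0 : 0 < b := lt_of_lt_of_le hx0 hxb
  have h1 : t * x ≤ β := by
    calc t * x ≤ |t| * x := mul_le_mul_of_nonneg_right (le_abs_self t) hx0.le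
    _ ≤ |t| * b := by nlinarith [abs_nonneg t]
    _ ≤ β := htβ
  have h2 : 1 - β ≤ 1 - t * x := by linarith
  have h3 : 0 < 1 - β := by linarith
  have h4 : 0 < 1 - t * x := lt_of_lt_of_le h3 h2
  rw [abs_div, abs_pow, abs_pow, abs_of_pos hx0, abs_of_pos h4]
  exact div_le_div₀ (by positivity) (pow_le_pow_left₀ hx0.le hxb _)
    (by positivity) (pow_le_pow_left₀ h3.le h2 _)

lemma aux_meas (s : ℝ) (k m : ℕ) : Measurable fun x : ℝ => x ^ k / (1 - s * x) ^ m :=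
  (measurable_id.pow_const k).div ((measurable_const.sub (measurable_id.const_mul s)).pow_const m)

lemma aux_ptderiv (k : ℕ) (x s : ℝ) (hx : 1 - s * x ≠ 0) :
    HasDerivAt (fun s => x ^ k / (1 - s * x) ^ (k + 1))
      ((k + 1 : ℝ) * x ^ (k + 1) / (1 - s * x) ^ (k + 2)) s := by
  have h1 : HasDerivAt (fun s : ℝ => 1 - s * x) (-x) s := by
    simpa using (hasDerivAt_mul_const x (x := s)).const_sub 1
  have h2 := h1.fun_pow (k + 1)
  have h3 := (hasDerivAt_const s (x ^ k)).fun_div h2 (pow_ne_zero _ hx)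
  refine h3.congr_deriv ?_
  simp only [Nat.add_sub_cancel, Nat.cast_add, Nat.cast_one]
  field_simp
  ring


lemma aux_integrable (a b : ℝ) (ha : 0 < a)
    (μ : Measure ℝ) [IsProbabilityMeasure μ] (hsupp : ∀ᵐ x ∂μ, x ∈ Set.Icc a b)
    (k : ℕ) (t : ℝ) (ht : |t| * b < 1) :
    Integrable (fun x => x ^ k / (1 - t * x) ^ (k + 1)) μ := by
  refine ⟨(aux_meas t k (k+1)).aestronglyMeasurable, ?_⟩
  apply MeasureTheory.HasFiniteIntegral.of_bounded
    (C := b ^ k / (1 - |t| * b) ^ (k + 1))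
  filter_upwards [hsupp] with x hx
  rw [Real.norm_eq_abs]
  exact aux_bound a b t x (|t| * b) ha hx le_rfl ht k

lemma aux_hasDerivAt (a b : ℝ) (ha : 0 < a) (hab : a ≤ b)
    (μ : Measure ℝ) [IsProbabilityMeasure μ] (hsupp : ∀ᵐ x ∂μ, x ∈ Set.Icc a b)
    (k : ℕ) (t : ℝ) (ht : |t| * b < 1) :
    HasDerivAt (fun s => ∫ x, x ^ k / (1 - s * x) ^ (k + 1) ∂μ)
      ((k + 1 : ℝ) * ∫ x, x ^ (k + 1) / (1 - t * x) ^ (k + 2) ∂μ) t := by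
  have hb : 0 < b := lt_of_lt_of_le ha hab
  set β : ℝ := (1 + |t| * b) / 2 with hβdef
  have hβ1 : β < 1 := by simp only [hβdef]; linarith
  have htβ : |t| * b < β := by simp only [hβdef]; linarith
  set ε : ℝ := (1 - |t| * b) / (2 * b) with hεdef
  have hε : 0 < ε := by
    apply div_pos (by linarith) (by linarith)
  have hball : ∀ s ∈ ball t ε, |s| * b ≤ β := by
    intro s hs
    rw [mem_ball, Real.dist_eq] at hs
    have : |s| ≤ |t| + ε := by
      have := abs_sub_abs_le_abs_sub s t
      linarith
    have hεb : ε * b = (1 - |t| * b) / 2 := by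
      rw [hεdef]; field_simp
    calc |s| * b ≤ (|t| + ε) * b := by nlinarith [abs_nonneg t]
    _ = |t| * b + ε * b := by ring
    _ = |t| * b + (1 - |t| * b) / 2 := by rw [hεb]
    _ = β := by rw [hβdef]; ring
  have key := hasDerivAt_integral_of_dominated_loc_of_deriv_le
    (F := fun s x => x ^ k / (1 - s * x) ^ (k + 1))
    (F' := fun s x => ((k : ℝ) + 1) * x ^ (k + 1) / (1 - s * x) ^ (k + 2))
    (μ := μ) (x₀ := t)
    (bound := fun _ => ((k : ℝ) + 1) * (b ^ (k + 1) / (1 - β) ^ (k + 2))) (ball_mem_nhds t hε)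
    ?_ ?_ ?_ ?_ ?_ ?_
  · have heq : ((k : ℝ) + 1) * ∫ x, x ^ (k + 1) / (1 - t * x) ^ (k + 2) ∂μ
        = ∫ x, ((k : ℝ) + 1) * x ^ (k + 1) / (1 - t * x) ^ (k + 2) ∂μ := by
      rw [← integral_const_mul]
      congr 1; funext x; rw [mul_div_assoc]
    rw [heq]; exact key.2
  · exact Eventually.of_forall fun s => (aux_meas s k (k+1)).aestronglyMeasurable
  · exact aux_integrable a b ha μ hsupp k t ht
  · exact (((measurable_const.mul (measurable_id.pow_const (k+1))).div
      ((measurable_const.sub (measurable_id.const_mul t)).pow_const (k+2))).aestronglyMeasurable)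
  · filter_upwards [hsupp] with x hx s hs
    have hb1 := aux_bound a b s x β ha hx (hball s hs) hβ1 (k + 1)
    rw [abs_div] at hb1
    rw [Real.norm_eq_abs, abs_div, abs_mul]
    have : |((k : ℝ) + 1)| = (k : ℝ) + 1 := abs_of_pos (by positivity)
    rw [this, mul_div_assoc]
    have h3 : (0:ℝ) < (k:ℝ) + 1 := by positivity
    have h4 : k + 1 + 1 = k + 2 := by ring
    rw [h4] at hb1
    exact mul_le_mul_of_nonneg_left hb1 h3.le
  · exact integrable_const _
  · filter_upwards [hsupp] with x hx s hs
    have hx0 : 0 < x := lt_of_lt_of_le ha hx.1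
    have h1 : s * x ≤ β := by
      calc s * x ≤ |s| * x := mul_le_mul_of_nonneg_right (le_abs_self s) hx0.le
      _ ≤ |s| * b := mul_le_mul_of_nonneg_left hx.2 (abs_nonneg s)
      _ ≤ β := hball s hs
    exact aux_ptderiv k x s (by linarith)


noncomputable def Gk (μ : Measure ℝ) (k : ℕ) (s : ℝ) : ℝ := ∫ x, x ^ k / (1 - s * x) ^ (k + 1) ∂μ

lemma Gk_hasDerivAt (a b : ℝ) (ha : 0 < a) (hab : a ≤ b)
    (μ : Measure ℝ) [IsProbabilityMeasure μ] (hsupp : ∀ᵐ x ∂μ, x ∈ Set.Icc a b)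
    (k : ℕ) (t : ℝ) (ht : |t| * b < 1) :
    HasDerivAt (Gk μ k) ((k + 1 : ℝ) * Gk μ (k + 1) t) t :=
  aux_hasDerivAt a b ha hab μ hsupp k t ht

lemma Gk_val (μ : Measure ℝ) (k : ℕ) : Gk μ k 0 = ∫ x, x ^ k ∂μ := by
  unfold Gk
  congr 1; funext x; simp

lemma Gk_val1 (μ : Measure ℝ) : Gk μ 1 0 = ∫ x, x ∂μ := by
  unfold Gk
  congr 1; funext x; simp

theorem stmt10 (a b : ℝ) (ha : 0 < a) (hab : a ≤ b)
    (μ : Measure ℝ) [IsProbabilityMeasure μ] (hsupp : ∀ᵐ x ∂μ, x ∈ Set.Icc a b)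
    (δ : ℝ) (hδ : 0 < δ) (g : ℝ → ℝ)
    (hsmooth : ContDiffOn ℝ (⊤ : ℕ∞) g (Set.Ioo (-δ) δ))
    (hg0 : g 0 = 0)
    (hgb : ∀ u ∈ Set.Ioo (-δ) δ, |g u| < 1 / b)
    (hginv : ∀ u ∈ Set.Ioo (-δ) δ, (∫ x, (g u * x) / (1 - g u * x) ∂μ) = u)
    (S : ℝ → ℝ) (hS0 : S 0 = deriv g 0)
    (hS : ∀ u : ℝ, u ≠ 0 → S u = (1 + u) * g u / u) :
    S 0 = 1 / (∫ x, x ∂μ) ∧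
    HasDerivAt S (-((∫ x, x ^ 2 ∂μ) - (∫ x, x ∂μ) ^ 2) / (∫ x, x ∂μ) ^ 3) 0 ∧
    HasDerivAt (deriv S)
      (4 * (∫ x, x ^ 2 ∂μ) ^ 2 / (∫ x, x ∂μ) ^ 5 - 2 * (∫ x, x ^ 3 ∂μ) / (∫ x, x ∂μ) ^ 4
        - 2 * (∫ x, x ^ 2 ∂μ) / (∫ x, x ∂μ) ^ 3) 0 := by
  have hb : 0 < b := lt_of_lt_of_le ha hab
  set I : Set ℝ := Set.Ioo (-δ) δ with hIdef
  have hIopen : IsOpen I := isOpen_Ioo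
  have h0I : (0:ℝ) ∈ I := ⟨by linarith, hδ⟩
  have hInhds : I ∈ 𝓝 (0:ℝ) := hIopen.mem_nhds h0I
  -- moments
  set m1 : ℝ := ∫ x, x ∂μ with hm1def
  set m2 : ℝ := ∫ x, x ^ 2 ∂μ with hm2def
  set m3 : ℝ := ∫ x, x ^ 3 ∂μ with hm3def
  -- derivatives of g
  set g1 : ℝ → ℝ := deriv g with hg1def
  set g2 : ℝ → ℝ := deriv g1 with hg2def
  set g3 : ℝ → ℝ := deriv g2 with hg3def
  set g4 : ℝ → ℝ := deriv g3 with hg4def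
  have hC1 : ContDiffOn ℝ (⊤ : ℕ∞) g1 I := hsmooth.deriv_of_isOpen hIopen (by simp)
  have hC2 : ContDiffOn ℝ (⊤ : ℕ∞) g2 I := hC1.deriv_of_isOpen hIopen (by simp)
  have hC3 : ContDiffOn ℝ (⊤ : ℕ∞) g3 I := hC2.deriv_of_isOpen hIopen (by simp)
  have hC4 : ContDiffOn ℝ (⊤ : ℕ∞) g4 I := hC3.deriv_of_isOpen hIopen (by simp)
  have hgd : ∀ u ∈ I, HasDerivAt g (g1 u) u := fun u hu =>
    ((hsmooth.differentiableOn (by simp)).differentiableAt (hIopen.mem_nhds hu)).hasDerivAt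
  have hg1d : ∀ u ∈ I, HasDerivAt g1 (g2 u) u := fun u hu =>
    ((hC1.differentiableOn (by simp)).differentiableAt (hIopen.mem_nhds hu)).hasDerivAt
  have hg2d : ∀ u ∈ I, HasDerivAt g2 (g3 u) u := fun u hu =>
    ((hC2.differentiableOn (by simp)).differentiableAt (hIopen.mem_nhds hu)).hasDerivAt
  have hg3d : ∀ u ∈ I, HasDerivAt g3 (g4 u) u := fun u hu =>
    ((hC3.differentiableOn (by simp)).differentiableAt (hIopen.mem_nhds hu)).hasDerivAt
  have hg4c : ContinuousAt g4 0 := (hC4.continuousOn.continuousAt hInhds)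
  have hgI : ∀ u ∈ I, |g u| * b < 1 := fun u hu => by
    have := hgb u hu
    rw [lt_div_iff₀ hb] at this
    exact this
  -- the key identity : Gk μ 0 (g u) = u + 1 on I
  have hA : ∀ u ∈ I, Gk μ 0 (g u) = u + 1 := by
    intro u hu
    have ht := hgI u hu
    have hint0 : Integrable (fun x => x ^ 0 / (1 - g u * x) ^ (0 + 1)) μ :=
      aux_integrable a b ha μ hsupp 0 (g u) ht
    have hae : ∀ᵐ x ∂μ, (g u * x) / (1 - g u * x)
        = x ^ 0 / (1 - g u * x) ^ (0 + 1) - 1 := by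
      filter_upwards [hsupp] with x hx
      have hx0 : 0 < x := lt_of_lt_of_le ha hx.1
      have h1 : g u * x ≤ |g u| * b := by
        calc g u * x ≤ |g u| * x := mul_le_mul_of_nonneg_right (le_abs_self _) hx0.le
        _ ≤ |g u| * b := mul_le_mul_of_nonneg_left hx.2 (abs_nonneg _)
      have h2 : 1 - g u * x ≠ 0 := by nlinarith
      field_simp
      ring
    have := hginv u hu
    rw [integral_congr_ae hae, integral_sub hint0 (integrable_const 1)] at this
    simp only [integral_const, measure_univ, probReal_univ, ENNReal.toReal_one, smul_eq_mul, one_mul] at this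
    unfold Gk
    linarith
  -- first implicit identity
  have hB : ∀ u ∈ I, Gk μ 1 (g u) * g1 u = 1 := by
    intro u hu
    have hcomp : HasDerivAt (fun v => Gk μ 0 (g v))
        (((0:ℕ) + 1 : ℝ) * Gk μ 1 (g u) * g1 u) u := by
      have := (Gk_hasDerivAt a b ha hab μ hsupp 0 (g u) (hgI u hu)).comp u (hgd u hu)
      exact this
    have heq : (fun v => Gk μ 0 (g v)) =ᶠ[𝓝 u] (fun v => v + 1) :=
      eventually_of_mem (hIopen.mem_nhds hu) (fun v hv => hA v hv)
    have h2 : HasDerivAt (fun v : ℝ => v + 1) (((0:ℕ) + 1 : ℝ) * Gk μ 1 (g u) * g1 u) u :=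
      hcomp.congr_of_eventuallyEq heq.symm
    have h3 : HasDerivAt (fun v : ℝ => v + 1) 1 u := (hasDerivAt_id u).add_const 1
    have := h2.unique h3
    push_cast at this
    linarith [this]
  -- second implicit identity
  have hCid : ∀ u ∈ I, 2 * Gk μ 2 (g u) * g1 u * g1 u + Gk μ 1 (g u) * g2 u = 0 := by
    intro u hu
    have hG1comp : HasDerivAt (fun v => Gk μ 1 (g v)) (((1:ℕ) + 1 : ℝ) * Gk μ 2 (g u) * g1 u) u := by
      have := (Gk_hasDerivAt a b ha hab μ hsupp 1 (g u) (hgI u hu)).comp u (hgd u hu)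
      exact this
    have hmul := hG1comp.fun_mul (hg1d u hu)
    have heq : (fun v => Gk μ 1 (g v) * g1 v) =ᶠ[𝓝 u] (fun _ => (1:ℝ)) :=
      eventually_of_mem (hIopen.mem_nhds hu) (fun v hv => hB v hv)
    have h2 := hmul.congr_of_eventuallyEq heq.symm
    have h4 := h2.unique (hasDerivAt_const u (1:ℝ))
    push_cast at h4
    linear_combination h4
  -- third implicit identity at 0
  have hDid : 6 * Gk μ 3 (g 0) * g1 0 ^ 3 + 6 * Gk μ 2 (g 0) * g1 0 * g2 0
      + Gk μ 1 (g 0) * g3 0 = 0 := by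
    have hG2comp : HasDerivAt (fun v => Gk μ 2 (g v)) (((2:ℕ) + 1 : ℝ) * Gk μ 3 (g 0) * g1 0) 0 := by
      have := (Gk_hasDerivAt a b ha hab μ hsupp 2 (g 0) (hgI 0 h0I)).comp 0 (hgd 0 h0I)
      exact this
    have hG1comp : HasDerivAt (fun v => Gk μ 1 (g v)) (((1:ℕ) + 1 : ℝ) * Gk μ 2 (g 0) * g1 0) 0 := by
      have := (Gk_hasDerivAt a b ha hab μ hsupp 1 (g 0) (hgI 0 h0I)).comp 0 (hgd 0 h0I)
      exact this
    have t2 := hG2comp.const_mul (2:ℝ)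
    have t3 := t2.fun_mul (hg1d 0 h0I)
    have t4 := t3.fun_mul (hg1d 0 h0I)
    have t5 := hG1comp.fun_mul (hg2d 0 h0I)
    have t6 := t4.fun_add t5
    have heq : (fun v => 2 * Gk μ 2 (g v) * g1 v * g1 v + Gk μ 1 (g v) * g2 v)
        =ᶠ[𝓝 0] (fun _ => (0:ℝ)) :=
      eventually_of_mem hInhds (fun v hv => hCid v hv)
    have h2 := t6.congr_of_eventuallyEq heq.symm
    have h4 := h2.unique (hasDerivAt_const 0 (0:ℝ))
    push_cast at h4
    linear_combination h4
  -- moment values and equations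
  have hGv1 : Gk μ 1 (g 0) = m1 := by rw [hg0, Gk_val1]
  have hGv2 : Gk μ 2 (g 0) = m2 := by rw [hg0, Gk_val]
  have hGv3 : Gk μ 3 (g 0) = m3 := by rw [hg0, Gk_val]
  have eqA : m1 * g1 0 = 1 := by
    have := hB 0 h0I
    rw [hGv1] at this
    exact this
  have eqB : 2 * m2 * g1 0 * g1 0 + m1 * g2 0 = 0 := by
    have := hCid 0 h0I
    rw [hGv1, hGv2] at this
    exact this
  have eqC : 6 * m3 * g1 0 ^ 3 + 6 * m2 * g1 0 * g2 0 + m1 * g3 0 = 0 := by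
    rw [hGv1, hGv2, hGv3] at hDid
    exact hDid
  -- positivity of the mean
  have hintx : Integrable (fun x : ℝ => x) μ := by
    have h01 : |(0:ℝ)| * b < 1 := by simp
    have := aux_integrable a b ha μ hsupp 1 0 h01
    simpa using this
  have hm1pos : 0 < m1 := by
    have hle : a ≤ m1 := by
      rw [hm1def]
      calc a = ∫ _x, a ∂μ := by simp
      _ ≤ ∫ x, x ∂μ := integral_mono_ae (integrable_const a) hintx (hsupp.mono fun x hx => hx.1)
    linarith
  have hm1ne : m1 ≠ 0 := ne_of_gt hm1pos
  -- explicit values of derivatives of g at 0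
  have hv1 : g1 0 = 1 / m1 := by
    field_simp
    linarith [eqA]
  have hv2 : g2 0 = -2 * m2 / m1 ^ 3 := by
    rw [hv1] at eqB
    field_simp at eqB ⊢
    linarith [eqB]
  have hv3 : g3 0 = 12 * m2 ^ 2 / m1 ^ 5 - 6 * m3 / m1 ^ 4 := by
    rw [hv1, hv2] at eqC
    field_simp at eqC ⊢
    linear_combination eqC
  -- target derivative values
  set s1 : ℝ := g1 0 + g2 0 / 2 with hs1def
  set s2 : ℝ := g2 0 + g3 0 / 3 with hs2def
  have hIne : ∀ᶠ u in 𝓝[≠] (0:ℝ), u ∈ I :=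
    (eventually_of_mem hInhds fun v hv => hv).filter_mono nhdsWithin_le_nhds
  have hne : ∀ᶠ u in 𝓝[≠] (0:ℝ), u ≠ (0:ℝ) := by
    filter_upwards [self_mem_nhdsWithin] with u hu
    exact hu
  have hcg : ContinuousAt g 0 := (hgd 0 h0I).continuousAt
  have hcg1 : ContinuousAt g1 0 := (hg1d 0 h0I).continuousAt
  have hcg2 : ContinuousAt g2 0 := (hg2d 0 h0I).continuousAt
  have hcg3 : ContinuousAt g3 0 := (hg3d 0 h0I).continuousAt
  have hone : ∀ u : ℝ, HasDerivAt (fun v : ℝ => 1 + v) 1 u := fun u =>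
    (hasDerivAt_id u).const_add 1
  -- claim 1
  have claim1 : S 0 = 1 / m1 := by rw [hS0, hv1]
  -- claim 2 via L'Hopital
  have hN2d : ∀ u ∈ I, HasDerivAt (fun v => (1 + v) * g v - g1 0 * v)
      (g u + (1 + u) * g1 u - g1 0) u := by
    intro u hu
    have h := ((hone u).fun_mul (hgd u hu)).fun_sub ((hasDerivAt_id u).const_mul (g1 0))
    refine h.congr_deriv ?_
    ring
  have hN2'd : ∀ u ∈ I, HasDerivAt (fun v => g v + (1 + v) * g1 v - g1 0)
      (2 * g1 u + (1 + u) * g2 u) u := by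
    intro u hu
    have h := ((hgd u hu).fun_add ((hone u).fun_mul (hg1d u hu))).sub_const (g1 0)
    refine h.congr_deriv ?_
    ring
  have limA : Tendsto (fun u => (2 * g1 u + (1 + u) * g2 u) / 2) (𝓝[≠] (0:ℝ)) (𝓝 s1) := by
    have hc : ContinuousAt (fun u => (2 * g1 u + (1 + u) * g2 u) / 2) 0 :=
      ((continuousAt_const.mul hcg1).add
        ((continuousAt_const.add continuousAt_id).mul hcg2)).div_const 2
    have := hc.tendsto.mono_left (nhdsWithin_le_nhds (s := {(0:ℝ)}ᶜ))
    have hval : (2 * g1 0 + (1 + 0) * g2 0) / 2 = s1 := by rw [hs1def]; ring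
    rwa [hval] at this
  have lhop2 : Tendsto (fun u => (g u + (1 + u) * g1 u - g1 0) / (2 * u))
      (𝓝[≠] (0:ℝ)) (𝓝 s1) := by
    apply HasDerivAt.lhopital_zero_nhdsNE (f' := fun u => 2 * g1 u + (1 + u) * g2 u)
      (g' := fun _ => (2:ℝ))
    · exact hIne.mono fun u hu => hN2'd u hu
    · exact Eventually.of_forall fun u => by simpa using (hasDerivAt_id u).const_mul (2:ℝ)
    · exact Eventually.of_forall fun u => two_ne_zero
    · have hc : ContinuousAt (fun u => g u + (1 + u) * g1 u - g1 0) 0 :=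
        (hcg.add ((continuousAt_const.add continuousAt_id).mul hcg1)).sub continuousAt_const
      have := hc.tendsto.mono_left (nhdsWithin_le_nhds (s := {(0:ℝ)}ᶜ))
      have hval : g 0 + (1 + 0) * g1 0 - g1 0 = 0 := by rw [hg0]; ring
      rwa [hval] at this
    · have : Tendsto (fun u : ℝ => 2 * u) (𝓝 0) (𝓝 (2 * 0)) :=
        (continuous_const.mul continuous_id).tendsto 0
      simpa using this.mono_left (nhdsWithin_le_nhds (s := {(0:ℝ)}ᶜ))
    · exact limA
  have lhop1 : Tendsto (fun u => ((1 + u) * g u - g1 0 * u) / u ^ 2)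
      (𝓝[≠] (0:ℝ)) (𝓝 s1) := by
    apply HasDerivAt.lhopital_zero_nhdsNE (f' := fun u => g u + (1 + u) * g1 u - g1 0)
      (g' := fun u => 2 * u)
    · exact hIne.mono fun u hu => hN2d u hu
    · exact Eventually.of_forall fun u => by simpa using hasDerivAt_pow 2 u
    · exact hne.mono fun u hu => mul_ne_zero two_ne_zero hu
    · have hc : ContinuousAt (fun u => (1 + u) * g u - g1 0 * u) 0 :=
        ((continuousAt_const.add continuousAt_id).mul hcg).sub (continuousAt_const.mul continuousAt_id)
      have := hc.tendsto.mono_left (nhdsWithin_le_nhds (s := {(0:ℝ)}ᶜ))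
      have hval : (1 + 0) * g 0 - g1 0 * 0 = 0 := by rw [hg0]; ring
      rwa [hval] at this
    · have : Tendsto (fun u : ℝ => u ^ 2) (𝓝 0) (𝓝 (0 ^ 2)) :=
        (continuous_pow 2).tendsto 0
      simpa using this.mono_left (nhdsWithin_le_nhds (s := {(0:ℝ)}ᶜ))
    · exact lhop2
  have claim2' : HasDerivAt S s1 0 := by
    rw [hasDerivAt_iff_tendsto_slope]
    have heq : (fun u => ((1 + u) * g u - g1 0 * u) / u ^ 2) =ᶠ[𝓝[≠] (0:ℝ)] slope S 0 := by
      filter_upwards [hIne, hne] with u huI hu0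
      rw [slope_def_field, hS u hu0, hS0]
      field_simp
      ring
    exact lhop1.congr' heq
  have hs1eq : s1 = -(m2 - m1 ^ 2) / m1 ^ 3 := by
    rw [hs1def, hv1, hv2]; field_simp; ring
  have claim2 : HasDerivAt S (-(m2 - m1 ^ 2) / m1 ^ 3) 0 := hs1eq ▸ claim2'
  -- claim 3
  have hderivS0 : deriv S 0 = s1 := claim2'.deriv
  have hSd : ∀ u ∈ I, u ≠ 0 → HasDerivAt S
      (((g u + (1 + u) * g1 u) * u - (1 + u) * g u) / u ^ 2) u := by
    intro u hu hu0
    have hform := ((hone u).fun_mul (hgd u hu)).fun_div (hasDerivAt_id u) hu0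
    have heq : (fun v => (1 + v) * g v / v) =ᶠ[𝓝 u] S :=
      eventually_of_mem (isOpen_compl_singleton.mem_nhds hu0)
        (fun v hv => (hS v hv).symm)
    have h2 := hform.congr_of_eventuallyEq heq.symm
    refine h2.congr_deriv ?_
    simp only [id_eq]
    field_simp
  have hderivS : ∀ u ∈ I, u ≠ 0 → deriv S u
      = ((g u + (1 + u) * g1 u) * u - (1 + u) * g u) / u ^ 2 := fun u hu h0 =>
    (hSd u hu h0).deriv
  -- N3 chain
  have hN3d : ∀ u ∈ I, HasDerivAt
      (fun v => (g v + (1 + v) * g1 v) * v - (1 + v) * g v - s1 * v ^ 2)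
      (2 * u * g1 u + (u + u ^ 2) * g2 u - 2 * s1 * u) u := by
    intro u hu
    have h1 := (((hgd u hu).fun_add ((hone u).fun_mul (hg1d u hu))).fun_mul (hasDerivAt_id u))
    have h2 := (hone u).fun_mul (hgd u hu)
    have h3 := (hasDerivAt_pow 2 u).const_mul s1
    have h := (h1.fun_sub h2).fun_sub h3
    refine h.congr_deriv ?_
    simp only [id_eq]
    push_cast
    ring
  have hN3'd : ∀ u ∈ I, HasDerivAt
      (fun v => 2 * v * g1 v + (v + v ^ 2) * g2 v - 2 * s1 * v)
      (2 * g1 u + (1 + 4 * u) * g2 u + (u + u ^ 2) * g3 u - 2 * s1) u := by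
    intro u hu
    have h1 := ((hasDerivAt_id u).const_mul (2:ℝ)).fun_mul (hg1d u hu)
    have h2 := ((hasDerivAt_id u).fun_add (hasDerivAt_pow 2 u)).fun_mul (hg2d u hu)
    have h3 := (hasDerivAt_id u).const_mul (2 * s1)
    have h := (h1.fun_add h2).fun_sub h3
    refine h.congr_deriv ?_
    simp only [id_eq]
    push_cast
    ring
  have hN3''d : ∀ u ∈ I, HasDerivAt
      (fun v => 2 * g1 v + (1 + 4 * v) * g2 v + (v + v ^ 2) * g3 v - 2 * s1)
      (6 * g2 u + (2 + 6 * u) * g3 u + (u + u ^ 2) * g4 u) u := by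
    intro u hu
    have h1 := (hg1d u hu).const_mul (2:ℝ)
    have h2 := (((hasDerivAt_id u).const_mul (4:ℝ)).const_add 1).fun_mul (hg2d u hu)
    have h3 := ((hasDerivAt_id u).fun_add (hasDerivAt_pow 2 u)).fun_mul (hg3d u hu)
    have h := ((h1.fun_add h2).fun_add h3).sub_const (2 * s1)
    refine h.congr_deriv ?_
    simp only [id_eq]
    push_cast
    ring
  have limB : Tendsto (fun u => (6 * g2 u + (2 + 6 * u) * g3 u + (u + u ^ 2) * g4 u) / 6)
      (𝓝[≠] (0:ℝ)) (𝓝 s2) := by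
    have hc : ContinuousAt (fun u => (6 * g2 u + (2 + 6 * u) * g3 u + (u + u ^ 2) * g4 u) / 6) 0 :=
      (((continuousAt_const.mul hcg2).add
        ((continuousAt_const.add (continuousAt_const.mul continuousAt_id)).mul hcg3)).add
        ((continuousAt_id.add (continuous_pow 2).continuousAt).mul hg4c)).div_const 6
    have := hc.tendsto.mono_left (nhdsWithin_le_nhds (s := {(0:ℝ)}ᶜ))
    have hval : (6 * g2 0 + (2 + 6 * 0) * g3 0 + (0 + 0 ^ 2) * g4 0) / 6 = s2 := by
      rw [hs2def]; ring
    rwa [hval] at this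
  have lh3 : Tendsto (fun u => (2 * g1 u + (1 + 4 * u) * g2 u + (u + u ^ 2) * g3 u - 2 * s1) / (6 * u))
      (𝓝[≠] (0:ℝ)) (𝓝 s2) := by
    apply HasDerivAt.lhopital_zero_nhdsNE
      (f' := fun u => 6 * g2 u + (2 + 6 * u) * g3 u + (u + u ^ 2) * g4 u)
      (g' := fun _ => (6:ℝ))
    · exact hIne.mono fun u hu => hN3''d u hu
    · exact Eventually.of_forall fun u => by simpa using (hasDerivAt_id u).const_mul (6:ℝ)
    · exact Eventually.of_forall fun _ => by norm_num
    · have hc : ContinuousAt (fun u => 2 * g1 u + (1 + 4 * u) * g2 u + (u + u ^ 2) * g3 u - 2 * s1) 0 :=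
        (((continuousAt_const.mul hcg1).add
          ((continuousAt_const.add (continuousAt_const.mul continuousAt_id)).mul hcg2)).add
          ((continuousAt_id.add (continuous_pow 2).continuousAt).mul hcg3)).sub continuousAt_const
      have := hc.tendsto.mono_left (nhdsWithin_le_nhds (s := {(0:ℝ)}ᶜ))
      have hval : 2 * g1 0 + (1 + 4 * 0) * g2 0 + (0 + 0 ^ 2) * g3 0 - 2 * s1 = 0 := by
        rw [hs1def]; ring
      rwa [hval] at this
    · have : Tendsto (fun u : ℝ => 6 * u) (𝓝 0) (𝓝 (6 * 0)) :=
        (continuous_const.mul continuous_id).tendsto 0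
      simpa using this.mono_left (nhdsWithin_le_nhds (s := {(0:ℝ)}ᶜ))
    · exact limB
  have lh2 : Tendsto (fun u => (2 * u * g1 u + (u + u ^ 2) * g2 u - 2 * s1 * u) / (3 * u ^ 2))
      (𝓝[≠] (0:ℝ)) (𝓝 s2) := by
    apply HasDerivAt.lhopital_zero_nhdsNE
      (f' := fun u => 2 * g1 u + (1 + 4 * u) * g2 u + (u + u ^ 2) * g3 u - 2 * s1)
      (g' := fun u => 6 * u)
    · exact hIne.mono fun u hu => hN3'd u hu
    · refine Eventually.of_forall fun u => ?_
      have h := (hasDerivAt_pow 2 u).const_mul (3:ℝ)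
      refine h.congr_deriv ?_
      push_cast
      ring
    · exact hne.mono fun u hu => mul_ne_zero (by norm_num) hu
    · have hc : ContinuousAt (fun u => 2 * u * g1 u + (u + u ^ 2) * g2 u - 2 * s1 * u) 0 :=
        (((continuousAt_const.mul continuousAt_id).mul hcg1).add
          ((continuousAt_id.add (continuous_pow 2).continuousAt).mul hcg2)).sub
          (continuousAt_const.mul continuousAt_id)
      have := hc.tendsto.mono_left (nhdsWithin_le_nhds (s := {(0:ℝ)}ᶜ))
      have hval : 2 * 0 * g1 0 + (0 + 0 ^ 2) * g2 0 - 2 * s1 * 0 = 0 := by ring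
      rwa [hval] at this
    · have : Tendsto (fun u : ℝ => 3 * u ^ 2) (𝓝 0) (𝓝 (3 * 0 ^ 2)) :=
        (continuous_const.mul (continuous_pow 2)).tendsto 0
      simpa using this.mono_left (nhdsWithin_le_nhds (s := {(0:ℝ)}ᶜ))
    · exact lh3
  have lh1 : Tendsto (fun u => ((g u + (1 + u) * g1 u) * u - (1 + u) * g u - s1 * u ^ 2) / u ^ 3)
      (𝓝[≠] (0:ℝ)) (𝓝 s2) := by
    apply HasDerivAt.lhopital_zero_nhdsNE
      (f' := fun u => 2 * u * g1 u + (u + u ^ 2) * g2 u - 2 * s1 * u)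
      (g' := fun u => 3 * u ^ 2)
    · exact hIne.mono fun u hu => hN3d u hu
    · exact Eventually.of_forall fun u => by simpa using hasDerivAt_pow 3 u
    · exact hne.mono fun u hu => mul_ne_zero (by norm_num) (pow_ne_zero 2 hu)
    · have hc : ContinuousAt (fun u => (g u + (1 + u) * g1 u) * u - (1 + u) * g u - s1 * u ^ 2) 0 :=
        (((hcg.add ((continuousAt_const.add continuousAt_id).mul hcg1)).mul continuousAt_id).sub
          ((continuousAt_const.add continuousAt_id).mul hcg)).sub
          (continuousAt_const.mul (continuous_pow 2).continuousAt)
      have := hc.tendsto.mono_left (nhdsWithin_le_nhds (s := {(0:ℝ)}ᶜ))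
      have hval : (g 0 + (1 + 0) * g1 0) * 0 - (1 + 0) * g 0 - s1 * 0 ^ 2 = 0 := by
        rw [hg0]; ring
      rwa [hval] at this
    · have : Tendsto (fun u : ℝ => u ^ 3) (𝓝 0) (𝓝 (0 ^ 3)) :=
        (continuous_pow 3).tendsto 0
      simpa using this.mono_left (nhdsWithin_le_nhds (s := {(0:ℝ)}ᶜ))
    · exact lh2
  have claim3' : HasDerivAt (deriv S) s2 0 := by
    rw [hasDerivAt_iff_tendsto_slope]
    have heq : (fun u => ((g u + (1 + u) * g1 u) * u - (1 + u) * g u - s1 * u ^ 2) / u ^ 3)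
        =ᶠ[𝓝[≠] (0:ℝ)] slope (deriv S) 0 := by
      filter_upwards [hIne, hne] with u huI hu0
      rw [slope_def_field, hderivS u huI hu0, hderivS0]
      field_simp
      ring
    exact lh1.congr' heq
  have hs2eq : s2 = 4 * m2 ^ 2 / m1 ^ 5 - 2 * m3 / m1 ^ 4 - 2 * m2 / m1 ^ 3 := by
    rw [hs2def, hv2, hv3]; ring
  exact ⟨claim1, claim2, hs2eq ▸ claim3'⟩
end

section
/- Let μ be a Borel probability measure on ℝ with support contained in [a, b] where 0 < a ≤ b. Let g : (−1, 0) → (−∞, 0) be differentiable with ψ_μ(g(u)) = u for all u ∈ (−1, 0), and define S(u) = (1 + u)·g(u)/u. Then for every u ∈ (−1, 0): S(u) > 0 and (1 + u)/S(u) − u·x > 0 for every x ∈ [a, b], so that H(u) := −(1 + u)·log S(u) − ∫ log((1 + u)/S(u) − u·x) dμ(x) is a well-defined real number; moreover H is differentiable on (−1, 0) with H'(u) = −log S(u), and if in addition g is twice differentiable then H is twice differentiable with H''(u) = −S'(u)/S(u). -/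
/-!
Since `(1 + u) / S u = u / g u`, the integrand factors as `(u / g u) * (1 - g u * x)`, and
`H u = -u log S u - log (1 + u) - L (g u)` with `L z = ∫ log (1 - z x) dμ`. Differentiating under
the integral gives `L' z = -ψ_μ(z) / z`, so the chain rule and `ψ_μ (g u) = u` turn the derivative
of `L ∘ g` into `-u g' / g`, which cancels against the derivative of `-u log S u - log (1 + u)`
except for `-log S u`.
-/

open MeasureTheory Real Set Filter Topology Metric

noncomputable def logPotential (μ : Measure ℝ) (z : ℝ) : ℝ := ∫ x, log (1 - z * x) ∂μ

noncomputable def sTransform (g : ℝ → ℝ) (u : ℝ) : ℝ := (1 + u) * g u / u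

section logPotential

variable {μ : Measure ℝ} {b : ℝ}

lemma integrable_log_one_sub_mul [IsFiniteMeasure μ] (hsupp : ∀ᵐ x ∂μ, x ∈ Icc 0 b) {z : ℝ}
    (hz : z ≤ 0) : Integrable (fun x => log (1 - z * x)) μ := by
  refine Integrable.mono' (integrable_const (log (1 - z * b)))
    (measurable_log.comp (by fun_prop)).aestronglyMeasurable ?_
  filter_upwards [hsupp] with x ⟨hx0, hxb⟩
  have h1 : 1 ≤ 1 - z * x := by nlinarith
  rw [norm_of_nonneg (log_nonneg h1)]
  exact log_le_log (by linarith) (by nlinarith)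

lemma integral_log_mul_one_sub_mul [IsProbabilityMeasure μ] (hsupp : ∀ᵐ x ∂μ, x ∈ Icc 0 b)
    {c z : ℝ} (hc : 0 < c) (hz : z ≤ 0) :
    Integrable (fun x => log (c * (1 - z * x))) μ ∧
      ∫ x, log (c * (1 - z * x)) ∂μ = log c + logPotential μ z := by
  have hsplit : (fun x => log c + log (1 - z * x)) =ᵐ[μ] fun x => log (c * (1 - z * x)) := by
    filter_upwards [hsupp] with x ⟨hx0, _⟩
    rw [log_mul hc.ne' (by nlinarith)]
  have hint := (integrable_const (log c)).add (integrable_log_one_sub_mul hsupp hz)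
  refine ⟨hint.congr hsplit, ?_⟩
  rw [← integral_congr_ae hsplit, integral_add (integrable_const _)
    (integrable_log_one_sub_mul hsupp hz), integral_const, probReal_univ, one_smul, logPotential]

lemma integral_neg_div_one_sub_mul {z : ℝ} (hz : z ≠ 0) :
    ∫ x, -x / (1 - z * x) ∂μ = -(∫ x, z * x / (1 - z * x) ∂μ) / z := by
  have hpt : ∀ x : ℝ, -x / (1 - z * x) = -z⁻¹ * (z * x / (1 - z * x)) := fun x => by
    field_simp
  simp_rw [hpt, integral_const_mul]
  ring

lemma hasDerivAt_logPotential [IsFiniteMeasure μ] (hsupp : ∀ᵐ x ∂μ, x ∈ Icc 0 b) {z : ℝ}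
    (hz : z < 0) :
    HasDerivAt (logPotential μ) (-(∫ x, z * x / (1 - z * x) ∂μ) / z) z := by
  have hneg : ∀ y ∈ ball z (-z), y < 0 := fun y hy => by
    linarith [(abs_lt.mp (mem_ball_iff_norm.mp hy)).2]
  rw [← integral_neg_div_one_sub_mul hz.ne]
  refine (hasDerivAt_integral_of_dominated_loc_of_deriv_le
    (F := fun y x => log (1 - y * x)) (F' := fun y x => -x / (1 - y * x)) (bound := fun _ => b)
    (ball_mem_nhds z (by linarith : 0 < -z))
    (Eventually.of_forall fun y => (measurable_log.comp (by fun_prop)).aestronglyMeasurable)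
    (integrable_log_one_sub_mul hsupp hz.le) (Measurable.aestronglyMeasurable (by fun_prop)) ?_
    (integrable_const b) ?_).2
  · filter_upwards [hsupp] with x ⟨hx0, hxb⟩ y hy
    have h1 : 1 ≤ 1 - y * x := by nlinarith [hneg y hy]
    rw [norm_div, norm_neg, norm_of_nonneg hx0, norm_of_nonneg (by linarith)]
    exact (div_le_self hx0 h1).trans hxb
  · filter_upwards [hsupp] with x ⟨hx0, _⟩ y hy
    have h1 : 1 ≤ 1 - y * x := by nlinarith [hneg y hy]
    simpa using (((hasDerivAt_id' y).mul_const x).const_sub 1).log (by linarith)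

end logPotential

section sTransform

variable {g : ℝ → ℝ} {u : ℝ}

lemma sTransform_pos (hu : u ∈ Ioo (-1) 0) (hg : g u < 0) : 0 < sTransform g u :=
  div_pos_of_neg_of_neg (mul_neg_of_pos_of_neg (by linarith [hu.1]) hg) hu.2

lemma one_add_div_sTransform_sub_mul (hu : u ≠ 0) (h1u : 1 + u ≠ 0) (hg : g u ≠ 0) (x : ℝ) :
    (1 + u) / sTransform g u - u * x = u / g u * (1 - g u * x) := by
  rw [sTransform]
  field_simp

lemma hasDerivAt_sTransform {g' : ℝ} (hu : u ≠ 0) (hd : HasDerivAt g g' u) :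
    HasDerivAt (sTransform g) (((g u + (1 + u) * g') * u - (1 + u) * g u) / u ^ 2) u := by
  refine ((((hasDerivAt_id u).const_add 1).mul hd).div (hasDerivAt_id u) hu).congr_deriv ?_
  simp

variable {μ : Measure ℝ} [IsProbabilityMeasure μ] {b : ℝ}

lemma neg_mul_log_sTransform_sub_integral_log (hsupp : ∀ᵐ x ∂μ, x ∈ Icc 0 b)
    (hu : u ∈ Ioo (-1) 0) (hg : g u < 0) :
    -(1 + u) * log (sTransform g u) - ∫ x, log ((1 + u) / sTransform g u - u * x) ∂μ
      = -u * log (sTransform g u) - log (1 + u) - logPotential μ (g u) := by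
  have h1u : 0 < 1 + u := by linarith [hu.1]
  have hfactor := one_add_div_sTransform_sub_mul hu.2.ne h1u.ne' hg.ne
  have hw : (1 + u) / sTransform g u = u / g u := by simpa using hfactor 0
  simp_rw [hfactor]
  rw [(integral_log_mul_one_sub_mul hsupp (div_pos_of_neg_of_neg hu.2 hg) hg.le).2, ← hw,
    log_div h1u.ne' (sTransform_pos hu hg).ne']
  ring

lemma hasDerivAt_neg_mul_log_sTransform_sub {g' : ℝ} (hsupp : ∀ᵐ x ∂μ, x ∈ Icc 0 b)
    (hu : u ∈ Ioo (-1) 0) (hg : g u < 0) (hd : HasDerivAt g g' u)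
    (hinv : ∫ x, g u * x / (1 - g u * x) ∂μ = u) :
    HasDerivAt (fun v => -v * log (sTransform g v) - log (1 + v) - logPotential μ (g v))
      (-log (sTransform g u)) u := by
  have hu0 : u ≠ 0 := hu.2.ne
  have h1u : 1 + u ≠ 0 := by linarith [hu.1]
  have hS := hasDerivAt_sTransform hu0 hd
  have hL := hasDerivAt_logPotential hsupp hg
  rw [hinv] at hL
  have hsum := (((hasDerivAt_id' u).neg.mul (hS.log (sTransform_pos hu hg).ne')).sub
    (((hasDerivAt_id' u).const_add 1).log h1u)).sub (hL.comp u hd)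
  refine hsum.congr_deriv ?_
  have hg0 : g u ≠ 0 := hg.ne
  generalize log (sTransform g u) = ℓ
  simp only [sTransform, Pi.neg_apply]
  field_simp
  ring

end sTransform

theorem stmt12_general (a b : ℝ) (ha : 0 < a)
    (μ : Measure ℝ) [IsProbabilityMeasure μ] (hsupp : ∀ᵐ x ∂μ, x ∈ Set.Icc a b)
    (g g' : ℝ → ℝ)
    (hgneg : ∀ u ∈ Set.Ioo (-1 : ℝ) 0, g u < 0)
    (hd : ∀ u ∈ Set.Ioo (-1 : ℝ) 0, HasDerivAt g (g' u) u)
    (hinv : ∀ u ∈ Set.Ioo (-1 : ℝ) 0, (∫ x, (g u * x) / (1 - g u * x) ∂μ) = u)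
    (S H : ℝ → ℝ)
    (hS : ∀ u : ℝ, S u = (1 + u) * g u / u)
    (hH : ∀ u : ℝ, H u = -(1 + u) * Real.log (S u)
        - ∫ x, Real.log ((1 + u) / S u - u * x) ∂μ) :
    (∀ u ∈ Set.Ioo (-1 : ℝ) 0,
        0 < S u ∧
        (∀ x ∈ Set.Icc a b, 0 < (1 + u) / S u - u * x) ∧
        Integrable (fun x => Real.log ((1 + u) / S u - u * x)) μ ∧
        HasDerivAt H (-Real.log (S u)) u) ∧
    ((∀ u ∈ Set.Ioo (-1 : ℝ) 0, DifferentiableAt ℝ g' u) →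
        ∀ u ∈ Set.Ioo (-1 : ℝ) 0, HasDerivAt (deriv H) (-(deriv S u) / S u) u) := by
  obtain rfl : S = sTransform g := funext hS
  have hsupp₀ : ∀ᵐ x ∂μ, x ∈ Icc 0 b := hsupp.mono fun x hx => ⟨ha.le.trans hx.1, hx.2⟩
  have hHd : ∀ u ∈ Ioo (-1 : ℝ) 0, HasDerivAt H (-log (sTransform g u)) u := fun u hu =>
    (hasDerivAt_neg_mul_log_sTransform_sub hsupp₀ hu (hgneg u hu) (hd u hu) (hinv u hu))
      |>.congr_of_eventuallyEq <| by
        filter_upwards [Ioo_mem_nhds hu.1 hu.2] with v hv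
        rw [hH, neg_mul_log_sTransform_sub_integral_log hsupp₀ hv (hgneg v hv)]
  refine ⟨fun u hu => ?_, fun _ u hu => ?_⟩
  · have hfactor := one_add_div_sTransform_sub_mul hu.2.ne (by linarith [hu.1]) (hgneg u hu).ne
    refine ⟨sTransform_pos hu (hgneg u hu), fun x hx => ?_, ?_, hHd u hu⟩
    · have hx0 : 0 < x := ha.trans_le hx.1
      rw [hfactor]
      exact mul_pos (div_pos_of_neg_of_neg hu.2 (hgneg u hu)) (by nlinarith [hgneg u hu])
    · simp_rw [hfactor]
      exact (integral_log_mul_one_sub_mul hsupp₀ (div_pos_of_neg_of_neg hu.2 (hgneg u hu))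
        (hgneg u hu).le).1
  · have hSd := hasDerivAt_sTransform hu.2.ne (hd u hu)
    have hderivH : deriv H =ᶠ[𝓝 u] fun v => -log (sTransform g v) := by
      filter_upwards [Ioo_mem_nhds hu.1 hu.2] with v hv using (hHd v hv).deriv
    rw [hSd.deriv, neg_div]
    exact (hSd.log (sTransform_pos hu (hgneg u hu)).ne').neg.congr_of_eventuallyEq hderivH

theorem stmt12 (a b : ℝ) (ha : 0 < a) (hab : a ≤ b)
    (μ : Measure ℝ) [IsProbabilityMeasure μ] (hsupp : ∀ᵐ x ∂μ, x ∈ Set.Icc a b)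
    (g g' : ℝ → ℝ)
    (hgneg : ∀ u ∈ Set.Ioo (-1 : ℝ) 0, g u < 0)
    (hd : ∀ u ∈ Set.Ioo (-1 : ℝ) 0, HasDerivAt g (g' u) u)
    (hinv : ∀ u ∈ Set.Ioo (-1 : ℝ) 0, (∫ x, (g u * x) / (1 - g u * x) ∂μ) = u)
    (S H : ℝ → ℝ)
    (hS : ∀ u : ℝ, S u = (1 + u) * g u / u)
    (hH : ∀ u : ℝ, H u = -(1 + u) * Real.log (S u)
        - ∫ x, Real.log ((1 + u) / S u - u * x) ∂μ) :
    (∀ u ∈ Set.Ioo (-1 : ℝ) 0,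
        0 < S u ∧
        (∀ x ∈ Set.Icc a b, 0 < (1 + u) / S u - u * x) ∧
        Integrable (fun x => Real.log ((1 + u) / S u - u * x)) μ ∧
        HasDerivAt H (-Real.log (S u)) u) ∧
    ((∀ u ∈ Set.Ioo (-1 : ℝ) 0, DifferentiableAt ℝ g' u) →
        ∀ u ∈ Set.Ioo (-1 : ℝ) 0, HasDerivAt (deriv H) (-(deriv S u) / S u) u) :=
  stmt12_general a b ha μ hsupp g g' hgneg hd hinv S H hS hH
end

section
/- Let U ⊆ ℂ be open, let f : U → ℂ be holomorphic, and let K ⊆ U be compact. Then there exists a constant C > 0 such that for all u, v ∈ K, |(f(u) − f(v))² − (u − v)²·f'(u)·f'(v)| ≤ C·|u − v|⁴. -/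
/-!
With `D = f u - f v`, `h = u - v`, `a = f' u` and `b = f' v` one has the ring identity
`D² - h²ab = -(D - ha)(D - hb) + D(2D - h(a + b))`.
Near the diagonal, `D - ha` and `D - hb` are first-order Taylor remainders, hence `O(h²)`,
`D = O(h)`, and `2D - h(a + b)` is the trapezoid-rule remainder, hence `O(h³)`; each bound is a
mean value estimate along a ball on which `f'`, `f''`, `f'''` are bounded. Away from the
diagonal the left-hand side is bounded on the compact set `K × K`, while `|u - v|` is bounded
below.
-/

open Metric Set

section Taylor

variable {𝕜 E : Type*} [RCLike 𝕜] [NormedAddCommGroup E] [NormedSpace 𝕜 E]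

theorem norm_le_mul_of_hasDerivWithinAt_closedBall {g g' : 𝕜 → E} {v : 𝕜} {ρ B : ℝ}
    (hg : ∀ z ∈ closedBall v ρ, HasDerivWithinAt g (g' z) (closedBall v ρ) z) (hv : g v = 0)
    (hB : ∀ z ∈ closedBall v ρ, ‖g' z‖ ≤ B) {z : 𝕜} (hz : z ∈ closedBall v ρ) :
    ‖g z‖ ≤ B * ρ := by
  have hvv : v ∈ closedBall v ρ := mem_closedBall_self (dist_nonneg.trans hz)
  have hmvt := (convex_closedBall v ρ).norm_image_sub_le_of_norm_hasDerivWithin_le hg hB hvv hz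
  rw [hv, sub_zero] at hmvt
  refine hmvt.trans (mul_le_mul_of_nonneg_left ?_ ((norm_nonneg _).trans (hB v hvv)))
  rwa [← dist_eq_norm]

variable {f f₁ f₂ f₃ : 𝕜 → 𝕜} {v : 𝕜} {ρ M₁ M₂ M₃ : ℝ}

theorem norm_sub_sq_sub_sq_mul_mul_le
    (hf : ∀ z ∈ closedBall v ρ, HasDerivWithinAt f (f₁ z) (closedBall v ρ) z)
    (hf₁ : ∀ z ∈ closedBall v ρ, HasDerivWithinAt f₁ (f₂ z) (closedBall v ρ) z)
    (hf₂ : ∀ z ∈ closedBall v ρ, HasDerivWithinAt f₂ (f₃ z) (closedBall v ρ) z)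
    (hM₁ : ∀ z ∈ closedBall v ρ, ‖f₁ z‖ ≤ M₁) (hM₂ : ∀ z ∈ closedBall v ρ, ‖f₂ z‖ ≤ M₂)
    (hM₃ : ∀ z ∈ closedBall v ρ, ‖f₃ z‖ ≤ M₃) {u : 𝕜} (hu : u ∈ closedBall v ρ) :
    ‖(f u - f v) ^ 2 - (u - v) ^ 2 * f₁ u * f₁ v‖ ≤ (M₂ ^ 2 + M₁ * M₃) * ρ ^ 4 := by
  set s := closedBall v ρ
  have hdist : ∀ z ∈ s, ‖z - v‖ ≤ ρ := fun z hz => by rwa [← dist_eq_norm]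
  have hid : ∀ z, HasDerivWithinAt (fun w => w - v) 1 s z := fun z =>
    (hasDerivWithinAt_id z s).sub_const v
  have hD : ‖f u - f v‖ ≤ M₁ * ρ :=
    norm_le_mul_of_hasDerivWithinAt_closedBall (fun z hz => (hf z hz).sub_const (f v))
      (sub_self _) hM₁ hu
  have hP : ‖f u - f v - (u - v) * f₁ v‖ ≤ M₂ * ρ * ρ := by
    refine norm_le_mul_of_hasDerivWithinAt_closedBall
      (g := fun z => f z - f v - (z - v) * f₁ v) (g' := fun z => f₁ z - f₁ v)
      (fun z hz => ?_) (by ring) (fun z hz => ?_) hu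
    · exact ((hf z hz).sub_const (f v)).sub ((hid z).mul_const (f₁ v)) |>.congr_deriv (by ring)
    · exact norm_le_mul_of_hasDerivWithinAt_closedBall (fun z hz => (hf₁ z hz).sub_const _)
        (sub_self _) hM₂ hz
  have hQ : ‖f u - f v - (u - v) * f₁ u‖ ≤ ρ * M₂ * ρ := by
    refine norm_le_mul_of_hasDerivWithinAt_closedBall
      (g := fun z => f z - f v - (z - v) * f₁ z) (g' := fun z => -((z - v) * f₂ z))
      (fun z hz => ?_) (by ring) (fun z hz => ?_) hu
    · exact ((hf z hz).sub_const (f v)).sub ((hid z).mul (hf₁ z hz)) |>.congr_deriv (by ring)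
    · rw [norm_neg, norm_mul]
      exact mul_le_mul (hdist z hz) (hM₂ z hz) (norm_nonneg _) ((norm_nonneg _).trans (hdist z hz))
  have hE : ‖2 * (f u - f v) - (u - v) * (f₁ u + f₁ v)‖ ≤ ρ * M₃ * ρ * ρ := by
    refine norm_le_mul_of_hasDerivWithinAt_closedBall
      (g := fun z => 2 * (f z - f v) - (z - v) * (f₁ z + f₁ v))
      (g' := fun z => f₁ z - f₁ v - (z - v) * f₂ z) (fun z hz => ?_) (by ring) (fun z hz => ?_) hu
    · exact (((hf z hz).sub_const (f v)).const_mul 2).sub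
        ((hid z).mul ((hf₁ z hz).add_const (f₁ v))) |>.congr_deriv (by ring)
    refine norm_le_mul_of_hasDerivWithinAt_closedBall
      (g := fun z => f₁ z - f₁ v - (z - v) * f₂ z) (g' := fun z => -((z - v) * f₃ z))
      (fun z hz => ?_) (by ring) (fun z hz => ?_) hz
    · exact ((hf₁ z hz).sub_const (f₁ v)).sub ((hid z).mul (hf₂ z hz)) |>.congr_deriv (by ring)
    · rw [norm_neg, norm_mul]
      exact mul_le_mul (hdist z hz) (hM₃ z hz) (norm_nonneg _) ((norm_nonneg _).trans (hdist z hz))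
  have key : (f u - f v) ^ 2 - (u - v) ^ 2 * f₁ u * f₁ v =
      -((f u - f v - (u - v) * f₁ u) * (f u - f v - (u - v) * f₁ v)) +
        (f u - f v) * (2 * (f u - f v) - (u - v) * (f₁ u + f₁ v)) := by ring
  rw [key]
  calc _ ≤ ‖f u - f v - (u - v) * f₁ u‖ * ‖f u - f v - (u - v) * f₁ v‖ +
        ‖f u - f v‖ * ‖2 * (f u - f v) - (u - v) * (f₁ u + f₁ v)‖ := by
        refine (norm_add_le _ _).trans ?_
        rw [norm_neg, norm_mul, norm_mul]
    _ ≤ (ρ * M₂ * ρ) * (M₂ * ρ * ρ) + (M₁ * ρ) * (ρ * M₃ * ρ * ρ) := by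
        gcongr
        · exact (norm_nonneg _).trans hQ
        · exact (norm_nonneg _).trans hD
    _ = (M₂ ^ 2 + M₁ * M₃) * ρ ^ 4 := by ring

end Taylor

theorem IsCompact.exists_pos_bound_of_continuousOn {α E : Type*} [TopologicalSpace α]
    [SeminormedAddCommGroup E] {s : Set α} {f : α → E} (hs : IsCompact s)
    (hf : ContinuousOn f s) : ∃ M > 0, ∀ x ∈ s, ‖f x‖ ≤ M := by
  obtain ⟨M, hM⟩ := hs.exists_bound_of_continuousOn hf
  exact ⟨max M 1, by positivity, fun x hx => (hM x hx).trans (le_max_left _ _)⟩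

theorem continuousOn_sub_sq_sub_sq_mul_mul {R : Type*} [TopologicalSpace R] [Ring R]
    [IsTopologicalRing R] {f f₁ : R → R} {K : Set R} (hf : ContinuousOn f K)
    (hf₁ : ContinuousOn f₁ K) :
    ContinuousOn (fun p : R × R => (f p.1 - f p.2) ^ 2 - (p.1 - p.2) ^ 2 * f₁ p.1 * f₁ p.2)
      (K ×ˢ K) := by
  have hfst : MapsTo Prod.fst (K ×ˢ K) K := fun p hp => hp.1
  have hsnd : MapsTo Prod.snd (K ×ˢ K) K := fun p hp => hp.2
  exact (((hf.comp continuousOn_fst hfst).sub (hf.comp continuousOn_snd hsnd)).pow 2).sub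
    ((((continuousOn_fst.sub continuousOn_snd).pow 2).mul
      (hf₁.comp continuousOn_fst hfst)).mul (hf₁.comp continuousOn_snd hsnd))

theorem AnalyticOnNhd.exists_norm_sub_sq_sub_sq_mul_deriv_le {𝕜 : Type*} [RCLike 𝕜]
    {f : 𝕜 → 𝕜} {K : Set 𝕜} {r : ℝ} (hK : IsCompact K) (hf : AnalyticOnNhd 𝕜 f (cthickening r K)) :
    ∃ C > 0, ∀ u ∈ K, ∀ v ∈ K, ‖u - v‖ ≤ r →
      ‖(f u - f v) ^ 2 - (u - v) ^ 2 * deriv f u * deriv f v‖ ≤ C * ‖u - v‖ ^ 4 := by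
  have hderiv (k : ℕ) (z : 𝕜) (hz : z ∈ cthickening r K) :
      HasDerivAt (deriv^[k] f) (deriv^[k + 1] f z) z := by
    rw [Function.iterate_succ_apply']
    exact (hf.iterated_deriv k z hz).differentiableAt.hasDerivAt
  have hbound (k : ℕ) : ∃ M > 0, ∀ z ∈ cthickening r K, ‖deriv^[k] f z‖ ≤ M :=
    hK.cthickening.exists_pos_bound_of_continuousOn (hf.iterated_deriv k).continuousOn
  obtain ⟨M₁, hM₁pos, hM₁⟩ := hbound 1
  obtain ⟨M₂, hM₂pos, hM₂⟩ := hbound 2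
  obtain ⟨M₃, hM₃pos, hM₃⟩ := hbound 3
  refine ⟨M₂ ^ 2 + M₁ * M₃, by positivity, fun u hu v hv huv => ?_⟩
  have hball : closedBall v ‖u - v‖ ⊆ cthickening r K :=
    (closedBall_subset_cthickening hv _).trans (cthickening_mono huv K)
  exact norm_sub_sq_sub_sq_mul_mul_le (f₂ := deriv^[2] f) (f₃ := deriv^[3] f)
    (fun z hz => (hderiv 0 z (hball hz)).hasDerivWithinAt)
    (fun z hz => (hderiv 1 z (hball hz)).hasDerivWithinAt)
    (fun z hz => (hderiv 2 z (hball hz)).hasDerivWithinAt)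
    (fun z hz => hM₁ z (hball hz)) (fun z hz => hM₂ z (hball hz))
    (fun z hz => hM₃ z (hball hz)) (by simp [dist_eq_norm])

theorem stmt13 (U : Set ℂ) (hU : IsOpen U) (f : ℂ → ℂ)
    (hf : ∀ z ∈ U, DifferentiableAt ℂ f z)
    (K : Set ℂ) (hK : IsCompact K) (hKU : K ⊆ U) :
    ∃ C > (0 : ℝ), ∀ u ∈ K, ∀ v ∈ K,
      ‖(f u - f v) ^ 2 - (u - v) ^ 2 * deriv f u * deriv f v‖
        ≤ C * ‖u - v‖ ^ 4 := by
  have hfa : AnalyticOnNhd ℂ f U :=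
    DifferentiableOn.analyticOnNhd (fun z hz => (hf z hz).differentiableWithinAt) hU
  obtain ⟨r, hr, hrU⟩ := hK.exists_cthickening_subset_open hU hKU
  obtain ⟨C, hC, hnear⟩ := (hfa.mono hrU).exists_norm_sub_sq_sub_sq_mul_deriv_le hK
  obtain ⟨A, hA, hfar⟩ := (hK.prod hK).exists_pos_bound_of_continuousOn
    (continuousOn_sub_sq_sub_sq_mul_mul (hfa.continuousOn.mono hKU)
      (hfa.deriv.continuousOn.mono hKU))
  refine ⟨C + A / r ^ 4, by positivity, fun u hu v hv => ?_⟩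
  rcases le_or_gt ‖u - v‖ r with huv | huv
  · exact (hnear u hu v hv huv).trans
      (mul_le_mul_of_nonneg_right (le_add_of_nonneg_right (by positivity)) (by positivity))
  · calc _ ≤ A := hfar (u, v) ⟨hu, hv⟩
      _ = A / r ^ 4 * r ^ 4 := by field_simp
      _ ≤ (C + A / r ^ 4) * ‖u - v‖ ^ 4 :=
        mul_le_mul (le_add_of_nonneg_left (by positivity)) (pow_le_pow_left₀ hr.le huv.le 4)
          (by positivity) (by positivity)
end

section
/- Let N ≥ 1 and k ≥ 1 be integers, let 1 ≤ ℓ ≤ k, let c_1, …, c_k be real numbers with c_a > 0 for all a and c_1 + ⋯ + c_k < 1, and let i_1, …, i_ℓ ∈ {1, …, N}. Define w_j = (N − j) + Σ_{a=1}^{ℓ−1} c_a·𝟙[i_a = j] for j ∈ {1, …, N}. Then for every j ≠ i_ℓ both c_ℓ + w_{i_ℓ} − w_j ≠ 0 and w_{i_ℓ} − w_j ≠ 0, and ∏_{j ∈ {1,…,N}, j ≠ i_ℓ} (c_ℓ + w_{i_ℓ} − w_j)/(w_{i_ℓ} − w_j) > 0. -/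
open Finset

/-- The evaluation point obtained from `ρ_N = (N-1, N-2, …, 1, 0)` (indexed by `j ∈ {1,…,N}`,
so coordinate `j` equals `N - j`) by shifting coordinate `i a` by `c a` for each
`a = 1, …, ℓ-1`; shifts at a repeated coordinate accumulate. -/
def wvec (N ℓ : ℕ) (c : ℕ → ℝ) (i : ℕ → ℕ) (j : ℕ) : ℝ :=
  ((N : ℝ) - (j : ℝ)) + ∑ a ∈ Finset.Ico 1 ℓ, c a * (if i a = j then 1 else 0)

/-
The coordinates of `w` differ from those of `ρ_N` by shifts lying in `[0, c_1 + ⋯ + c_{ℓ-1}]`,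
and `c_1 + ⋯ + c_ℓ < 1`; so `w_{i_ℓ} - w_j` and `c_ℓ + w_{i_ℓ} - w_j` are both the nonzero
integer `j - i_ℓ` perturbed by less than `1`, hence nonzero and of the same sign.
-/

section IntPerturbation

variable {K : Type*} [Field K] [LinearOrder K] [IsStrictOrderedRing K]

theorem Int.cast_add_pos_of_pos_of_abs_lt_one {n : ℤ} {x : K} (hn : 0 < n) (hx : |x| < 1) :
    0 < (n : K) + x := by
  have h1 : (1 : K) ≤ n := by exact_mod_cast hn
  linarith [neg_abs_le x]

theorem Int.cast_add_neg_of_neg_of_abs_lt_one {n : ℤ} {x : K} (hn : n < 0) (hx : |x| < 1) :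
    (n : K) + x < 0 := by
  have h1 : (n : K) ≤ -1 := by exact_mod_cast Int.le_sub_one_of_lt hn
  linarith [le_abs_self x]

theorem Int.cast_add_ne_zero_of_abs_lt_one {n : ℤ} {x : K} (hn : n ≠ 0) (hx : |x| < 1) :
    (n : K) + x ≠ 0 := by
  rcases hn.lt_or_gt with hneg | hpos
  · exact (Int.cast_add_neg_of_neg_of_abs_lt_one hneg hx).ne
  · exact (Int.cast_add_pos_of_pos_of_abs_lt_one hpos hx).ne'

theorem Int.div_cast_add_pos_of_abs_lt_one {n : ℤ} {x y : K} (hn : n ≠ 0) (hx : |x| < 1)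
    (hy : |y| < 1) : 0 < ((n : K) + x) / ((n : K) + y) := by
  rcases hn.lt_or_gt with hneg | hpos
  · exact div_pos_of_neg_of_neg (Int.cast_add_neg_of_neg_of_abs_lt_one hneg hx)
      (Int.cast_add_neg_of_neg_of_abs_lt_one hneg hy)
  · exact div_pos (Int.cast_add_pos_of_pos_of_abs_lt_one hpos hx)
      (Int.cast_add_pos_of_pos_of_abs_lt_one hpos hy)

end IntPerturbation

section Shift

variable (ℓ : ℕ) (c : ℕ → ℝ) (i : ℕ → ℕ)

def wshift (j : ℕ) : ℝ := ∑ a ∈ Ico 1 ℓ, c a * (if i a = j then 1 else 0)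

theorem wvec_sub_wvec (N m j : ℕ) :
    wvec N ℓ c i m - wvec N ℓ c i j =
      (((j : ℤ) - m : ℤ) : ℝ) + (wshift ℓ c i m - wshift ℓ c i j) := by
  simp only [wvec, wshift]
  push_cast
  ring

variable {ℓ c}

theorem wshift_nonneg (hc : ∀ a ∈ Ico 1 ℓ, 0 ≤ c a) (j : ℕ) : 0 ≤ wshift ℓ c i j :=
  sum_nonneg fun a ha => mul_nonneg (hc a ha) (by split_ifs <;> norm_num)

theorem wshift_le_sum (hc : ∀ a ∈ Ico 1 ℓ, 0 ≤ c a) (j : ℕ) :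
    wshift ℓ c i j ≤ ∑ a ∈ Ico 1 ℓ, c a :=
  sum_le_sum fun a ha => mul_le_of_le_one_right (hc a ha) (by split_ifs <;> norm_num)

end Shift

theorem stmt15_general (N k ℓ : ℕ) (hℓ1 : 1 ≤ ℓ) (hℓk : ℓ ≤ k)
    (c : ℕ → ℝ) (hc : ∀ a ∈ Finset.Icc 1 k, 0 < c a)
    (hcsum : ∑ a ∈ Finset.Icc 1 k, c a < 1)
    (i : ℕ → ℕ) :
    (∀ j ∈ Finset.Icc 1 N, j ≠ i ℓ →
        c ℓ + wvec N ℓ c i (i ℓ) - wvec N ℓ c i j ≠ 0 ∧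
        wvec N ℓ c i (i ℓ) - wvec N ℓ c i j ≠ 0) ∧
    0 < ∏ j ∈ (Finset.Icc 1 N).erase (i ℓ),
        (c ℓ + wvec N ℓ c i (i ℓ) - wvec N ℓ c i j) /
          (wvec N ℓ c i (i ℓ) - wvec N ℓ c i j) := by
  have hc' : ∀ a ∈ Ico 1 ℓ, 0 ≤ c a := fun a ha =>
    (hc a (Ico_subset_Icc_self.trans (Icc_subset_Icc_right hℓk) ha)).le
  have hcℓ : 0 < c ℓ := hc ℓ (mem_Icc.mpr ⟨hℓ1, hℓk⟩)
  have hsum : ∑ a ∈ Ico 1 ℓ, c a + c ℓ < 1 := by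
    rw [← sum_Ico_succ_top hℓ1, Finset.Ico_add_one_right_eq_Icc]
    exact (sum_le_sum_of_subset_of_nonneg (Icc_subset_Icc_right hℓk)
      fun a ha _ => (hc a ha).le).trans_lt hcsum
  have hsmall (j : ℕ) :
      |wshift ℓ c i (i ℓ) - wshift ℓ c i j| < 1 ∧
        |c ℓ + (wshift ℓ c i (i ℓ) - wshift ℓ c i j)| < 1 := by
    have := wshift_nonneg i hc' j
    have := wshift_nonneg i hc' (i ℓ)
    have := wshift_le_sum i hc' j
    have := wshift_le_sum i hc' (i ℓ)
    constructor <;> rw [abs_lt] <;> constructor <;> linarith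
  have hn {j : ℕ} (hj : j ≠ i ℓ) : (j : ℤ) - i ℓ ≠ 0 :=
    sub_ne_zero.mpr (by exact_mod_cast hj)
  simp only [add_sub_assoc, wvec_sub_wvec, add_left_comm (c ℓ)]
  refine ⟨fun j _ hj => ⟨Int.cast_add_ne_zero_of_abs_lt_one (hn hj) (hsmall j).2,
    Int.cast_add_ne_zero_of_abs_lt_one (hn hj) (hsmall j).1⟩, prod_pos fun j hj => ?_⟩
  exact Int.div_cast_add_pos_of_abs_lt_one (hn (ne_of_mem_erase hj)) (hsmall j).2 (hsmall j).1

theorem stmt15 (N k ℓ : ℕ) (hN : 1 ≤ N) (hk : 1 ≤ k) (hℓ1 : 1 ≤ ℓ) (hℓk : ℓ ≤ k)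
    (c : ℕ → ℝ) (hc : ∀ a ∈ Finset.Icc 1 k, 0 < c a)
    (hcsum : ∑ a ∈ Finset.Icc 1 k, c a < 1)
    (i : ℕ → ℕ) (hi : ∀ a ∈ Finset.Icc 1 ℓ, i a ∈ Finset.Icc 1 N) :
    (∀ j ∈ Finset.Icc 1 N, j ≠ i ℓ →
        c ℓ + wvec N ℓ c i (i ℓ) - wvec N ℓ c i j ≠ 0 ∧
        wvec N ℓ c i (i ℓ) - wvec N ℓ c i j ≠ 0) ∧
    0 < ∏ j ∈ (Finset.Icc 1 N).erase (i ℓ),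
        (c ℓ + wvec N ℓ c i (i ℓ) - wvec N ℓ c i j) /
          (wvec N ℓ c i (i ℓ) - wvec N ℓ c i j) :=
  stmt15_general N k ℓ hℓ1 hℓk c hc hcsum i
end

section
/- Let 0 < c < 1 be real and let N ≥ 1 and 1 ≤ i ≤ N be integers. Then 0 < ∏_{j ∈ {1,…,N}, j ≠ i} (c + j − i)/(j − i) ≤ ∏_{j=2}^{N} (c + j − 1)/(j − 1). -/
/-!
The product is the Lagrange basis polynomial for the nodes `1, …, N`, attached to the node `i`
and evaluated at `i - c`. The factors with `j < i` lie in `(0, 1]`, while after the shift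
`j = i + k` the factors with `j > i` are `(c + k) / k ≥ 1` for `k = 1, …, N - i`. Dropping the
former and appending the factors for `k = N - i + 1, …, N - 1` only increases the product, and
the result is the right-hand side.
-/

open Finset

section ShiftedRatio

variable {c : ℝ}

theorem shifted_ratio_pos (hc0 : 0 < c) (hc1 : c < 1) {i j : ℕ} (hji : j ≠ i) :
    0 < (c + j - i) / (j - i) := by
  rcases hji.lt_or_gt with hlt | hgt
  · have : (j : ℝ) + 1 ≤ i := by exact_mod_cast hlt
    exact div_pos_of_neg_of_neg (by linarith) (by linarith)
  · have : (i : ℝ) + 1 ≤ j := by exact_mod_cast hgt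
    exact div_pos (by linarith) (by linarith)

theorem shifted_ratio_le_one (hc : 0 ≤ c) {i j : ℕ} (hji : j < i) :
    (c + j - i) / (j - i) ≤ 1 := by
  have : (j : ℝ) < i := by exact_mod_cast hji
  exact (div_le_one_of_neg (by linarith)).2 (by linarith)

theorem monotone_prod_range_add_div (hc : 0 ≤ c) :
    Monotone fun n => ∏ k ∈ range n, (c + (k + 1)) / (k + 1) := by
  refine monotone_nat_of_le_succ fun n => ?_
  rw [prod_range_succ]
  refine le_mul_of_one_le_right (prod_nonneg fun k _ => by positivity) ?_
  exact (one_le_div (by positivity)).2 (by linarith)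

theorem prod_Ioc_shifted_ratio (c : ℝ) (i N : ℕ) :
    ∏ j ∈ Ioc i N, (c + j - i) / (j - i) = ∏ k ∈ range (N - i), (c + (k + 1)) / (k + 1) := by
  rw [← Ico_add_one_add_one_eq_Ioc, prod_Ico_eq_prod_range, Nat.add_sub_add_right]
  refine prod_congr rfl fun k _ => ?_
  push_cast
  ring_nf

end ShiftedRatio

theorem prod_erase_Icc_eq_mul {M : Type*} [CommMonoid M] (f : ℕ → M) (a b i : ℕ) (ha : a ≤ i) :
    ∏ j ∈ (Icc a b).erase i, f j = (∏ j ∈ Icc a b with j < i, f j) * ∏ j ∈ Ioc i b, f j := by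
  rw [← prod_filter_mul_prod_filter_not _ (· < i)]
  congr 2 <;> ext j <;> simp only [mem_filter, mem_erase, mem_Icc, mem_Ioc] <;> omega

theorem stmt17_general (c : ℝ) (hc0 : 0 < c) (hc1 : c < 1) (N i : ℕ) (h1 : 1 ≤ i) :
    0 < ∏ j ∈ (Finset.Icc 1 N).erase i, (c + (j : ℝ) - (i : ℝ)) / ((j : ℝ) - (i : ℝ)) ∧
    ∏ j ∈ (Finset.Icc 1 N).erase i, (c + (j : ℝ) - (i : ℝ)) / ((j : ℝ) - (i : ℝ)) ≤
      ∏ j ∈ Finset.Icc 2 N, (c + (j : ℝ) - 1) / ((j : ℝ) - 1) := by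
  refine ⟨prod_pos fun j hj => shifted_ratio_pos hc0 hc1 (ne_of_mem_erase hj), ?_⟩
  have hrhs := prod_Ioc_shifted_ratio c 1 N
  rw [Nat.cast_one] at hrhs
  rw [prod_erase_Icc_eq_mul _ _ _ _ h1, prod_Ioc_shifted_ratio,
    show Icc 2 N = Ioc 1 N from Icc_add_one_left_eq_Ioc 1 N, hrhs]
  have hleft : ∏ j ∈ Icc 1 N with j < i, (c + j - i) / (j - i) ≤ 1 :=
    prod_le_one (fun j hj => (shifted_ratio_pos hc0 hc1 (mem_filter.1 hj).2.ne).le)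
      fun j hj => shifted_ratio_le_one hc0.le (mem_filter.1 hj).2
  calc _ ≤ 1 * ∏ k ∈ range (N - i), (c + (k + 1)) / (k + 1) :=
        mul_le_mul_of_nonneg_right hleft (prod_nonneg fun k _ => by positivity)
    _ ≤ _ := by
        rw [one_mul]
        exact monotone_prod_range_add_div hc0.le (by omega)

theorem stmt17 (c : ℝ) (hc0 : 0 < c) (hc1 : c < 1) (N i : ℕ) (h1 : 1 ≤ i) (h2 : i ≤ N) :
    0 < ∏ j ∈ (Finset.Icc 1 N).erase i, (c + (j : ℝ) - (i : ℝ)) / ((j : ℝ) - (i : ℝ)) ∧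
    ∏ j ∈ (Finset.Icc 1 N).erase i, (c + (j : ℝ) - (i : ℝ)) / ((j : ℝ) - (i : ℝ)) ≤
      ∏ j ∈ Finset.Icc 2 N, (c + (j : ℝ) - 1) / ((j : ℝ) - 1) :=
  stmt17_general c hc0 hc1 N i h1
end

section
/- Let z, c ∈ ℂ. Then there exists N₀ such that for all integers N ≥ N₀ the complex numbers z + N and z + c + N are not poles of the Gamma function, and the sequence N ↦ Γ(z + c + N)/(Γ(z + N) · exp(c · log N)) (with log N the real logarithm) tends to 1 as N → ∞. -/
/-!
Gauss's product formula `GammaSeq s n → Γ(s)` together with `Γ(s + n) = Γ(s) s (s + 1) ⋯ (s + n - 1)`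
gives `Γ(s + n) ~ Γ(n) n ^ s` for every `s` that is not a pole. The recurrence `Γ(s + 1) = s Γ(s)`
changes the ratio `Γ(s + n) / (Γ(n) n ^ s)` only by the factor `(s + n) / n → 1`, which extends the
asymptotics to all `s`, poles included. The theorem is the quotient of the asymptotics at `z + c` and
at `z`, as `exp (c log N) = N ^ c`.
-/

open Filter Topology Nat Complex

namespace Complex

theorem Gamma_add_natCast_eq_mul_prod {s : ℂ} (hs : ∀ m : ℕ, s ≠ -m) (n : ℕ) :
    Gamma (s + n) = Gamma s * ∏ j ∈ Finset.range n, (s + j) := by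
  induction n with
  | zero => simp
  | succ n ih =>
    have hsn : s + n ≠ 0 := fun h => hs n (eq_neg_of_add_eq_zero_left h)
    rw [Nat.cast_succ, ← add_assoc, Gamma_add_one _ hsn, ih, Finset.prod_range_succ]
    ring

theorem add_natCast_ne_neg_natCast {s : ℂ} {N : ℕ} (hN : -s.re < N) (m : ℕ) : s + N ≠ -m := by
  intro h
  have hre := congrArg re h
  simp only [add_re, natCast_re, neg_re] at hre
  linarith [(m.cast_nonneg : (0 : ℝ) ≤ m)]

theorem eventually_add_natCast_ne_neg_natCast (s : ℂ) :
    ∀ᶠ N : ℕ in atTop, ∀ m : ℕ, s + N ≠ -m :=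
  (tendsto_natCast_atTop_atTop.eventually_gt_atTop (-s.re)).mono
    fun _ hN => add_natCast_ne_neg_natCast hN

theorem tendsto_Gamma_add_div_Gamma_mul_cpow_of_ne_neg_nat {s : ℂ} (hs : ∀ m : ℕ, s ≠ -m) :
    Tendsto (fun n : ℕ => Gamma (s + n) / (Gamma n * (n : ℂ) ^ s)) atTop (𝓝 1) := by
  have hlim : Tendsto (fun n : ℕ => Gamma s / GammaSeq s n * ((n : ℂ) / (n + s))) atTop (𝓝 1) := by
    simpa [div_self (Gamma_ne_zero hs)] using
      ((tendsto_const_nhds (x := Gamma s)).div (GammaSeq_tendsto_Gamma s) (Gamma_ne_zero hs)).mul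
        (tendsto_natCast_div_add_atTop s)
  refine hlim.congr' ?_
  filter_upwards [eventually_ne_atTop 0] with n hn
  have hn' : (n : ℂ) ≠ 0 := Nat.cast_ne_zero.mpr hn
  have hfac : (n ! : ℂ) = n * Gamma n := by rw [← Gamma_nat_eq_factorial, Gamma_add_one _ hn']
  have hsn : s + n ≠ 0 := fun h => hs n (eq_neg_of_add_eq_zero_left h)
  have hprod : ∏ j ∈ Finset.range n, (s + j) ≠ 0 :=
    Finset.prod_ne_zero_iff.mpr fun j _ h => hs j (eq_neg_of_add_eq_zero_left h)
  rw [GammaSeq, Finset.prod_range_succ, hfac, Gamma_add_natCast_eq_mul_prod hs, add_comm (n : ℂ) s]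
  field_simp

theorem tendsto_Gamma_add_div_Gamma_mul_cpow_of_add_one {s : ℂ}
    (h : Tendsto (fun n : ℕ => Gamma (s + 1 + n) / (Gamma n * (n : ℂ) ^ (s + 1))) atTop (𝓝 1)) :
    Tendsto (fun n : ℕ => Gamma (s + n) / (Gamma n * (n : ℂ) ^ s)) atTop (𝓝 1) := by
  have hlim := h.mul (tendsto_natCast_div_add_atTop s)
  rw [one_mul] at hlim
  refine hlim.congr' ?_
  filter_upwards [eventually_ne_atTop 0, eventually_add_natCast_ne_neg_natCast s] with n hn hsn
  have hn' : (n : ℂ) ≠ 0 := Nat.cast_ne_zero.mpr hn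
  have hsn' : s + n ≠ 0 := by simpa using hsn 0
  rw [add_right_comm, Gamma_add_one _ hsn', cpow_add _ _ hn', cpow_one, add_comm (n : ℂ) s]
  field_simp

theorem tendsto_Gamma_add_div_Gamma_mul_cpow (s : ℂ) :
    Tendsto (fun n : ℕ => Gamma (s + n) / (Gamma n * (n : ℂ) ^ s)) atTop (𝓝 1) := by
  obtain ⟨k, hk⟩ := exists_nat_gt (-s.re)
  have hbase := tendsto_Gamma_add_div_Gamma_mul_cpow_of_ne_neg_nat (add_natCast_ne_neg_natCast hk)
  clear hk
  induction k generalizing s with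
  | zero => simpa using hbase
  | succ k ih =>
    refine tendsto_Gamma_add_div_Gamma_mul_cpow_of_add_one (ih (s + 1) ?_)
    simpa only [Nat.cast_succ, add_assoc, add_comm (1 : ℂ)] using hbase

end Complex

theorem stmt18 (z c : ℂ) :
    ∃ N₀ : ℕ, (∀ N : ℕ, N₀ ≤ N → ∀ m : ℕ, z + (N : ℂ) ≠ -(m : ℂ) ∧ z + c + (N : ℂ) ≠ -(m : ℂ)) ∧
      Tendsto (fun N : ℕ =>
          Complex.Gamma (z + c + (N : ℂ)) /
            (Complex.Gamma (z + (N : ℂ)) * Complex.exp (c * (Real.log N : ℂ))))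
        atTop (nhds 1) := by
  obtain ⟨N₀, hN₀⟩ := eventually_atTop.mp
    ((eventually_add_natCast_ne_neg_natCast z).and (eventually_add_natCast_ne_neg_natCast (z + c)))
  refine ⟨N₀, fun N hN m => ⟨(hN₀ N hN).1 m, (hN₀ N hN).2 m⟩, ?_⟩
  have hlim := (tendsto_Gamma_add_div_Gamma_mul_cpow (z + c)).div
    (tendsto_Gamma_add_div_Gamma_mul_cpow z) one_ne_zero
  rw [div_one] at hlim
  refine hlim.congr' ?_
  filter_upwards [eventually_ne_atTop 0] with N hN
  have hN' : (N : ℂ) ≠ 0 := Nat.cast_ne_zero.mpr hN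
  rw [Pi.div_apply, natCast_log, mul_comm c, ← cpow_def_of_ne_zero hN', cpow_add _ _ hN']
  have hGamma : Gamma N ≠ 0 := Gamma_ne_zero_of_re_pos (by simpa using Nat.pos_of_ne_zero hN)
  have hpow : (N : ℂ) ^ z ≠ 0 := cpow_ne_zero_iff.mpr (Or.inl hN')
  field_simp
end
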